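/- arXiv:1007.4678 — 6 statements merged into one kernel-verified Lean document; each statement's English description precedes it below -/
import Mathlib

section
/- Let H be a connected graded commutative Hopf algebra over ℂ and let K be the field of convergent Laurent series in a variable z (or any commutative ℂ-algebra equipped with a splitting K = K_- ⊕ K_+ into subalgebras, with K_+ the holomorphic part). Then every ℂ-algebra homomorphism γ : H → K admits a Birkhoff decomposition γ = (γ_- ∘ S) ⋆ γ_+ in the convolution product, where γ_± : H → ℂ ⊕ K_± are algebra homomorphisms, γ_-(Γ) ∈ K_- for Γ in the augmentation ideal, and γ_+ takes values in K_+. The decomposition is constructed recursively by γ_-(Γ) = -π(γ(Γ) + Σ γ_-(γ')γ(γ'')) and γ_+(Γ) = (1-π)(γ(Γ) + Σ γ_-(γ')γ(γ'')), where π is the projection onto K_- and the sum is over the reduced coproduct. -/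
/-!
The map `γ₋` is a fixed point `X` of Bogoliubov's recursion `X = ε - π (X ⋆ γ - X)`. By
connectedness `Δx = x ⊗ 1 + (terms whose left factor has lower degree)`, so the right-hand side
in degree `n` only involves `X` in degrees `< n`, and the iterates of the recursion stabilise
degree by degree.

Multiplicativity of `γ₋` goes by induction on the total degree. Writing `P = γ₋ ⋆ γ - γ₋`, the
induction hypothesis and `Δ(xy) = Δx Δy` give `P(xy) = (γ₋x + Px)(γ₋y + Py) - γ₋x γ₋y`; in
positive degree `γ₋ = -π ∘ P`, and the Rota–Baxter identity of the projection `π` turns this into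
`γ₋(xy) = γ₋x γ₋y`. Then `γ₊ := γ₋ ⋆ γ = ε + (1 - π) ∘ P` is an algebra map with values in `K₊`,
and `(γ₋ ∘ S) ⋆ γ₊ = ((γ₋ ∘ S) ⋆ γ₋) ⋆ γ = γ`.
-/

open TensorProduct WithConv

namespace Submodule

variable {R K : Type*} [CommRing R] [NonUnitalRing K] [Module R K] {p q : Submodule R K}

theorem projection_mul_projection (hpq : IsCompl p q)
    (hp : ∀ x ∈ p, ∀ y ∈ p, x * y ∈ p) (hq : ∀ x ∈ q, ∀ y ∈ q, x * y ∈ q) (a b : K) :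
    p.projection q hpq a * p.projection q hpq b =
      p.projection q hpq (p.projection q hpq a * b + a * p.projection q hpq b - a * b) := by
  have hπ : ∀ {u v}, u ∈ p → v ∈ q → p.projection q hpq (u + v) = u := fun hu hv => by
    rw [map_add, projection_apply_of_mem_left hpq hu, projection_apply_of_mem_right hpq hv,
      add_zero]
  obtain ⟨u, hu, v, hv, rfl⟩ := mem_sup.1 (hpq.sup_eq_top ▸ mem_top : a ∈ p ⊔ q)
  obtain ⟨u', hu', v', hv', rfl⟩ := mem_sup.1 (hpq.sup_eq_top ▸ mem_top : b ∈ p ⊔ q)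
  rw [hπ hu hv, hπ hu' hv',
    show u * (u' + v') + (u + v) * u' - (u + v) * (u' + v') = u * u' + -(v * v') by noncomm_ring,
    hπ (hp _ hu _ hu') (neg_mem (hq _ hv _ hv'))]

end Submodule

theorem AlgHom.toConv_comp_antipode_mul_toConv {R A C : Type*} [CommSemiring R] [Semiring C]
    [HopfAlgebra R C] [Semiring A] [Algebra R A] (f : C →ₐ[R] A) :
    toConv (f.toLinearMap ∘ₗ HopfAlgebra.antipode R) * toConv f.toLinearMap = 1 := by
  have h := LinearMap.algHom_comp_convMul_distrib f (toConv (HopfAlgebra.antipode R)) (toConv .id)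
  rw [LinearMap.antipode_mul_id] at h
  ext x
  simpa using congr($h.symm x)

namespace DirectSum.IsInternal

variable {R H M : Type*} [CommRing R] [AddCommGroup H] [Module R H] [AddCommGroup M] [Module R M]
  {ℬ : ℕ → Submodule R H}

theorem linearMap_ext (hℬ : IsInternal ℬ) {F G : H →ₗ[R] M}
    (hFG : ∀ n, ∀ x ∈ ℬ n, F x = G x) : F = G :=
  LinearMap.ext fun _ => Submodule.iSup_induction ℬ (motive := fun x => F x = G x)
    (hℬ.submodule_iSup_eq_top ▸ Submodule.mem_top) hFG (by simp)
    (fun _ _ hx hy => by simp [hx, hy])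

theorem exists_linearMap_apply_of_mem (hℬ : IsInternal ℬ) (φ : ∀ n, ℬ n →ₗ[R] M) :
    ∃ F : H →ₗ[R] M, ∀ n, ∀ x (hx : x ∈ ℬ n), F x = φ n ⟨x, hx⟩ := by
  refine ⟨toModule R ℕ M φ ∘ₗ (LinearEquiv.ofBijective (coeLinearMap ℬ) hℬ).symm.toLinearMap,
    fun n x hx => ?_⟩
  have hdec : (LinearEquiv.ofBijective (coeLinearMap ℬ) hℬ).symm x = lof R ℕ (ℬ ·) n ⟨x, hx⟩ := by
    rw [LinearEquiv.symm_apply_eq]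
    exact (coeLinearMap_of ℬ n ⟨x, hx⟩).symm
  simp [hdec]

theorem exists_isFixedPt_of_local (hℬ : IsInternal ℬ) (T : (H →ₗ[R] M) → H →ₗ[R] M)
    (hT : ∀ n X Y, (∀ p < n, ∀ a ∈ ℬ p, X a = Y a) → ∀ x ∈ ℬ n, T X x = T Y x) :
    ∃ X, Function.IsFixedPt T X := by
  have hstable : ∀ n, ∀ x ∈ ℬ n, ∀ k, n < k → (T^[k] 0) x = (T^[n + 1] 0) x := by
    intro n
    induction n using Nat.strong_induction_on with
    | _ n ih =>
      intro x hx k hk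
      obtain ⟨k, rfl⟩ := Nat.exists_eq_add_of_lt hk
      rw [Function.iterate_succ_apply', Function.iterate_succ_apply']
      refine hT n _ _ (fun p hp a ha => ?_) x hx
      rw [ih p hp a ha (n + k) (by omega), ih p hp a ha n hp]
  obtain ⟨X, hX⟩ := hℬ.exists_linearMap_apply_of_mem fun n => T^[n + 1] 0 ∘ₗ (ℬ n).subtype
  refine ⟨X, hℬ.linearMap_ext fun n x hx => ?_⟩
  rw [hX n x hx, LinearMap.comp_apply, Submodule.subtype_apply, Function.iterate_succ_apply']
  refine hT n _ _ (fun p hp a ha => ?_) x hx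
  rw [hX p a ha, LinearMap.comp_apply, Submodule.subtype_apply, hstable p a ha n hp]

end DirectSum.IsInternal

section Bihomogeneous

variable {R H : Type*} [CommRing R] [AddCommGroup H] [Module R H] (ℬ : ℕ → Submodule R H)

def bihomogeneous (s : Set (ℕ × ℕ)) : Submodule R (H ⊗[R] H) :=
  ⨆ pq ∈ s, LinearMap.range (TensorProduct.map (ℬ pq.1).subtype (ℬ pq.2).subtype)

variable {ℬ}

theorem tmul_mem_bihomogeneous {s : Set (ℕ × ℕ)} {pq : ℕ × ℕ} (hpq : pq ∈ s) {a b : H}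
    (ha : a ∈ ℬ pq.1) (hb : b ∈ ℬ pq.2) : a ⊗ₜ[R] b ∈ bihomogeneous ℬ s :=
  Submodule.mem_iSup_of_mem pq <| Submodule.mem_iSup_of_mem hpq ⟨⟨a, ha⟩ ⊗ₜ ⟨b, hb⟩, rfl⟩

theorem bihomogeneous_induction {s : Set (ℕ × ℕ)} {motive : H ⊗[R] H → Prop} (zero : motive 0)
    (add : ∀ t u, motive t → motive u → motive (t + u))
    (tmul : ∀ pq ∈ s, ∀ a ∈ ℬ pq.1, ∀ b ∈ ℬ pq.2, motive (a ⊗ₜ b))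
    {t : H ⊗[R] H} (ht : t ∈ bihomogeneous ℬ s) : motive t := by
  refine Submodule.iSup_induction _ (motive := motive) ht (fun pq t ht => ?_) zero add
  refine Submodule.iSup_induction _ (motive := motive) ht (fun hpq t ht => ?_) zero add
  obtain ⟨t, rfl⟩ := ht
  induction t using TensorProduct.induction_on with
  | zero => simpa using zero
  | tmul a b => exact tmul pq hpq a a.2 b b.2
  | add t u ht hu => simpa using add _ _ ht hu

end Bihomogeneous

section GradedBialgebra

variable {R H : Type*} [CommRing R] [Ring H] [Bialgebra R H] {ℬ : ℕ → Submodule R H}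

theorem rid_lTensor_counit_mem {s : Set (ℕ × ℕ)} {S : Set ℕ} (hs : ∀ pq ∈ s, pq.1 ∈ S)
    {t : H ⊗[R] H} (ht : t ∈ bihomogeneous ℬ s) :
    TensorProduct.rid R H (Coalgebra.counit.lTensor H t) ∈ ⨆ p ∈ S, ℬ p := by
  refine bihomogeneous_induction
    (motive := fun t => TensorProduct.rid R H (Coalgebra.counit.lTensor H t) ∈ ⨆ p ∈ S, ℬ p)
    (by simp) (fun t u ht hu => by simpa using add_mem ht hu) (fun pq hpq a ha b _ => ?_) ht
  simpa using Submodule.smul_mem _ _ (le_biSup ℬ (hs pq hpq) ha)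

theorem lid_rTensor_counit_mem {s : Set (ℕ × ℕ)} {S : Set ℕ} (hs : ∀ pq ∈ s, pq.2 ∈ S)
    {t : H ⊗[R] H} (ht : t ∈ bihomogeneous ℬ s) :
    TensorProduct.lid R H (Coalgebra.counit.rTensor H t) ∈ ⨆ q ∈ S, ℬ q := by
  refine bihomogeneous_induction
    (motive := fun t => TensorProduct.lid R H (Coalgebra.counit.rTensor H t) ∈ ⨆ q ∈ S, ℬ q)
    (by simp) (fun t u ht hu => by simpa using add_mem ht hu) (fun pq hpq a _ b hb => ?_) ht
  simpa using Submodule.smul_mem _ _ (le_biSup ℬ (hs pq hpq) hb)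

variable (hℬ : DirectSum.IsInternal ℬ) (hconn : ℬ 0 = 1)
  (hcomul : ∀ n, ∀ x ∈ ℬ n, Coalgebra.comul (R := R) x ∈ bihomogeneous ℬ {pq | pq.1 + pq.2 = n})
include hℬ hconn hcomul

theorem exists_comul_eq_tmul_one_add {n : ℕ} {x : H} (hx : x ∈ ℬ n) :
    ∃ t ∈ bihomogeneous ℬ {pq | pq.1 + pq.2 = n ∧ 0 < pq.2},
      Coalgebra.comul (R := R) x = x ⊗ₜ 1 + t := by
  obtain ⟨z, hz, t, ht, hzt⟩ : ∃ z ∈ ℬ n, ∃ t ∈ bihomogeneous ℬ {pq | pq.1 + pq.2 = n ∧ 0 < pq.2},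
      Coalgebra.comul (R := R) x = z ⊗ₜ 1 + t := by
    refine bihomogeneous_induction (motive := fun u => ∃ z ∈ ℬ n,
        ∃ t ∈ bihomogeneous ℬ {pq | pq.1 + pq.2 = n ∧ 0 < pq.2}, u = z ⊗ₜ 1 + t)
      ⟨0, zero_mem _, 0, zero_mem _, by simp⟩ ?_ ?_ (hcomul n x hx)
    · rintro _ _ ⟨z, hz, t, ht, rfl⟩ ⟨z', hz', t', ht', rfl⟩
      exact ⟨z + z', add_mem hz hz', t + t', add_mem ht ht', by rw [add_tmul]; abel⟩
    rintro ⟨p, q⟩ hpq a ha b hb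
    rcases Nat.eq_zero_or_pos q with rfl | hq
    · obtain ⟨c, rfl⟩ := Submodule.mem_one.mp (hconn ▸ hb)
      refine ⟨c • a, Submodule.smul_mem _ _ (hpq.symm ▸ ha), 0, zero_mem _, ?_⟩
      rw [Algebra.algebraMap_eq_smul_one, tmul_smul, smul_tmul', add_zero]
    · refine ⟨0, zero_mem _, a ⊗ₜ b, tmul_mem_bihomogeneous ?_ ha hb, by simp⟩
      exact show (p, q) ∈ {pq : ℕ × ℕ | pq.1 + pq.2 = n ∧ 0 < pq.2} from ⟨hpq, hq⟩
  refine ⟨t, ht, ?_⟩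
  suffices z = x by rw [hzt, this]
  have hlow : x - z ∈ ⨆ p ∈ {p | p < n}, ℬ p := by
    have h := congrArg (TensorProduct.rid R H ∘ Coalgebra.counit.lTensor H) hzt
    simp only [Function.comp_apply, Coalgebra.lTensor_counit_comul, map_add,
      LinearMap.lTensor_tmul, Bialgebra.counit_one, rid_tmul, one_smul] at h
    rw [h, add_sub_cancel_left]
    exact rid_lTensor_counit_mem (fun pq hpq => by simp at hpq ⊢; omega) ht
  have hdisj := hℬ.submodule_iSupIndep.disjoint_biSup (y := {p | p < n}) (lt_irrefl n)
  exact (sub_eq_zero.mp (Submodule.disjoint_def.mp hdisj _ (sub_mem hx hz) hlow)).symm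

theorem counit_eq_zero_of_mem {n : ℕ} (hn : n ≠ 0) {x : H} (hx : x ∈ ℬ n) :
    Coalgebra.counit (R := R) x = 0 := by
  obtain ⟨t, ht, h⟩ := exists_comul_eq_tmul_one_add hℬ hconn hcomul hx
  have hhigh : Coalgebra.counit (R := R) x • (1 : H) ∈ ⨆ q ∈ {q | q ≠ 0}, ℬ q := by
    have h := congrArg (TensorProduct.lid R H ∘ Coalgebra.counit.rTensor H) h
    simp only [Function.comp_apply, Coalgebra.rTensor_counit_comul, map_add,
      LinearMap.rTensor_tmul, lid_tmul, one_smul] at h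
    rw [eq_sub_of_add_eq h.symm]
    exact sub_mem (le_biSup ℬ (show n ∈ {q | q ≠ 0} from hn) hx)
      (lid_rTensor_counit_mem (fun pq hpq => by simp at hpq ⊢; omega) ht)
  have hzero : Coalgebra.counit (R := R) x • (1 : H) ∈ ℬ 0 := by
    rw [hconn, ← Algebra.algebraMap_eq_smul_one]
    exact Submodule.mem_one.mpr ⟨_, rfl⟩
  have hdisj := hℬ.submodule_iSupIndep.disjoint_biSup (y := {q | q ≠ 0}) (not_not.mpr rfl)
  have := congrArg (Coalgebra.counit (R := R)) (Submodule.disjoint_def.mp hdisj _ hzero hhigh)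
  simpa using this

end GradedBialgebra

section Bogoliubov

variable {R H K : Type*} [CommRing R] [Ring H] [Bialgebra R H] [CommRing K] [Algebra R K]
  {ℬ : ℕ → Submodule R H}

theorem mul'_map_mul_of_bihomogeneous (f : H →ₗ[R] K) (g : H →ₐ[R] K) {s s' : Set (ℕ × ℕ)}
    (hf : ∀ pq ∈ s, ∀ pq' ∈ s', ∀ a ∈ ℬ pq.1, ∀ c ∈ ℬ pq'.1, f (a * c) = f a * f c)
    {u v : H ⊗[R] H} (hu : u ∈ bihomogeneous ℬ s) (hv : v ∈ bihomogeneous ℬ s') :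
    LinearMap.mul' R K (map f g.toLinearMap (u * v)) =
      LinearMap.mul' R K (map f g.toLinearMap u) * LinearMap.mul' R K (map f g.toLinearMap v) := by
  refine bihomogeneous_induction (motive := fun u => ∀ v ∈ bihomogeneous ℬ s',
      LinearMap.mul' R K (map f g.toLinearMap (u * v)) =
        LinearMap.mul' R K (map f g.toLinearMap u) * LinearMap.mul' R K (map f g.toLinearMap v))
    (by simp) (fun u u' hu hu' v hv => by simp [add_mul, hu v hv, hu' v hv]) ?_ hu v hv
  intro pq hpq a ha b _ v hv
  refine bihomogeneous_induction (motive := fun v =>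
      LinearMap.mul' R K (map f g.toLinearMap (a ⊗ₜ b * v)) =
        LinearMap.mul' R K (map f g.toLinearMap (a ⊗ₜ b)) *
          LinearMap.mul' R K (map f g.toLinearMap v))
    (by simp) (fun v v' hv hv' => by simp only [mul_add, map_add, hv, hv']) ?_ hv
  intro pq' hpq' c hc d _
  simp only [Algebra.TensorProduct.tmul_mul_tmul, map_tmul, LinearMap.mul'_apply,
    AlgHom.toLinearMap_apply, map_mul, hf pq hpq pq' hpq' a ha c hc]
  ring

/-- For `X = γ₋` and `Γ` in the augmentation ideal this is `γ(Γ) + ∑ γ₋(Γ') γ(Γ'')`, the sum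
running over the reduced coproduct. -/
noncomputable def bogoliubovPreparation (γ : H →ₐ[R] K) (X : H →ₗ[R] K) : H →ₗ[R] K :=
  (toConv X * toConv γ.toLinearMap).ofConv - X

noncomputable def bogoliubovMap (π : K →ₗ[R] K) (γ : H →ₐ[R] K) (X : H →ₗ[R] K) :
    H →ₗ[R] K :=
  Algebra.linearMap R K ∘ₗ Coalgebra.counit - π ∘ₗ bogoliubovPreparation γ X

theorem bogoliubovMap_apply (π : K →ₗ[R] K) (γ : H →ₐ[R] K) (X : H →ₗ[R] K) (x : H) :
    bogoliubovMap π γ X x =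
      algebraMap R K (Coalgebra.counit x) - π (bogoliubovPreparation γ X x) :=
  rfl

theorem apply_eq_of_bogoliubovMap_eq {π : K →ₗ[R] K} {γ : H →ₐ[R] K} {X : H →ₗ[R] K}
    (hX : bogoliubovMap π γ X = X) (x : H) :
    X x = algebraMap R K (Coalgebra.counit x) - π (bogoliubovPreparation γ X x) := by
  rw [← bogoliubovMap_apply, hX]

theorem bogoliubovPreparation_apply_of_comul_eq (γ : H →ₐ[R] K) (X : H →ₗ[R] K) {x : H}
    {t : H ⊗[R] H} (h : Coalgebra.comul (R := R) x = x ⊗ₜ 1 + t) :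
    bogoliubovPreparation γ X x = LinearMap.mul' R K (map X γ.toLinearMap t) := by
  simp [bogoliubovPreparation, LinearMap.convMul_apply, h]

theorem map_one_of_bogoliubovMap_eq {π : K →ₗ[R] K} {γ : H →ₐ[R] K} {X : H →ₗ[R] K}
    (hX : bogoliubovMap π γ X = X) : X 1 = 1 := by
  have h : Coalgebra.comul (R := R) (1 : H) = 1 ⊗ₜ 1 + 0 := by
    rw [add_zero, Bialgebra.comul_one, Algebra.TensorProduct.one_def]
  rw [apply_eq_of_bogoliubovMap_eq hX, bogoliubovPreparation_apply_of_comul_eq γ X h]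
  simp

theorem sub_counit_mem_of_bogoliubovMap_eq {Kneg Kpos : Submodule R K} (hsplit : IsCompl Kneg Kpos)
    {γ : H →ₐ[R] K} {X : H →ₗ[R] K} (hX : bogoliubovMap (Kneg.projection Kpos hsplit) γ X = X)
    (x : H) : X x - algebraMap R K (Coalgebra.counit x) ∈ Kneg := by
  rw [apply_eq_of_bogoliubovMap_eq hX, sub_sub_cancel_left]
  exact neg_mem (Submodule.projection_apply_mem hsplit _)

theorem convMul_apply_mem_of_bogoliubovMap_eq {Kneg Kpos : Submodule R K}
    (hsplit : IsCompl Kneg Kpos) (hKposOne : (1 : K) ∈ Kpos) {γ : H →ₐ[R] K} {X : H →ₗ[R] K}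
    (hX : bogoliubovMap (Kneg.projection Kpos hsplit) γ X = X) (x : H) :
    (toConv X * toConv γ.toLinearMap) x ∈ Kpos := by
  have h : (toConv X * toConv γ.toLinearMap) x = bogoliubovPreparation γ X x + X x :=
    (sub_add_cancel _ _).symm
  rw [h, apply_eq_of_bogoliubovMap_eq hX, ← add_sub_assoc, add_sub_right_comm,
    Algebra.algebraMap_eq_smul_one]
  exact add_mem (Submodule.sub_projection_mem hsplit _) (Kpos.smul_mem _ hKposOne)

variable (hℬ : DirectSum.IsInternal ℬ) (hconn : ℬ 0 = 1)
  (hcomul : ∀ n, ∀ x ∈ ℬ n, Coalgebra.comul (R := R) x ∈ bihomogeneous ℬ {pq | pq.1 + pq.2 = n})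
include hℬ hconn hcomul

theorem bogoliubovPreparation_apply_eq_of_eqOn (γ : H →ₐ[R] K) {X Y : H →ₗ[R] K} {n : ℕ}
    (hXY : ∀ p < n, ∀ a ∈ ℬ p, X a = Y a) {x : H} (hx : x ∈ ℬ n) :
    bogoliubovPreparation γ X x = bogoliubovPreparation γ Y x := by
  obtain ⟨t, ht, h⟩ := exists_comul_eq_tmul_one_add hℬ hconn hcomul hx
  rw [bogoliubovPreparation_apply_of_comul_eq γ X h, bogoliubovPreparation_apply_of_comul_eq γ Y h]
  refine bihomogeneous_induction (motive := fun t =>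
      LinearMap.mul' R K (map X γ.toLinearMap t) = LinearMap.mul' R K (map Y γ.toLinearMap t))
    (by simp) (fun t u ht hu => by simp only [map_add, ht, hu]) ?_ ht
  intro pq hpq a ha b _
  simp [hXY pq.1 (by simp at hpq; omega) a ha]

theorem bogoliubovPreparation_apply_mul (γ : H →ₐ[R] K) {X : H →ₗ[R] K} {m n : ℕ}
    (hXmul : ∀ p p', p + p' < m + n → ∀ a ∈ ℬ p, ∀ c ∈ ℬ p', X (a * c) = X a * X c)
    {x y : H} (hx : x ∈ ℬ m) (hy : y ∈ ℬ n) :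
    bogoliubovPreparation γ X (x * y) =
      (X x + bogoliubovPreparation γ X x) * (X y + bogoliubovPreparation γ X y) - X x * X y := by
  obtain ⟨t, ht, hxt⟩ := exists_comul_eq_tmul_one_add hℬ hconn hcomul hx
  obtain ⟨s, hs, hys⟩ := exists_comul_eq_tmul_one_add hℬ hconn hcomul hy
  have hxy : Coalgebra.comul (R := R) (x * y) =
      (x * y) ⊗ₜ[R] (1 : H) + (x ⊗ₜ[R] (1 : H) * s + t * y ⊗ₜ[R] (1 : H) + t * s) := by
    rw [Bialgebra.comul_mul, hxt, hys, add_mul, mul_add, mul_add,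
      Algebra.TensorProduct.tmul_mul_tmul, mul_one, add_assoc, add_assoc]
  have hone : (1 : H) ∈ ℬ 0 := hconn ▸ Submodule.mem_one.mpr ⟨1, map_one _⟩
  have hx1 : x ⊗ₜ[R] (1 : H) ∈ bihomogeneous ℬ {(m, 0)} :=
    tmul_mem_bihomogeneous (Set.mem_singleton (m, 0)) hx hone
  have hy1 : y ⊗ₜ[R] (1 : H) ∈ bihomogeneous ℬ {(n, 0)} :=
    tmul_mem_bihomogeneous (Set.mem_singleton (n, 0)) hy hone
  rw [bogoliubovPreparation_apply_of_comul_eq γ X hxy,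
    bogoliubovPreparation_apply_of_comul_eq γ X hxt,
    bogoliubovPreparation_apply_of_comul_eq γ X hys]
  simp only [map_add]
  rw [mul'_map_mul_of_bihomogeneous X γ ?_ hx1 hs,
    mul'_map_mul_of_bihomogeneous X γ ?_ ht hy1, mul'_map_mul_of_bihomogeneous X γ ?_ ht hs]
  · simp only [map_tmul, LinearMap.mul'_apply, AlgHom.toLinearMap_apply, map_one, mul_one]
    ring
  all_goals
    rintro ⟨p, q⟩ hpq ⟨p', q'⟩ hpq'
    simp only [Set.mem_singleton_iff, Prod.mk.injEq, Set.mem_ofPred_eq] at hpq hpq'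
    exact hXmul p p' (by omega)

theorem exists_bogoliubovMap_eq (π : K →ₗ[R] K) (γ : H →ₐ[R] K) :
    ∃ X, bogoliubovMap π γ X = X :=
  hℬ.exists_isFixedPt_of_local _ fun _ _ _ hXY x hx => by
    rw [bogoliubovMap_apply, bogoliubovMap_apply,
      bogoliubovPreparation_apply_eq_of_eqOn hℬ hconn hcomul γ hXY hx]

variable (hmul : ∀ m n : ℕ, ∀ x ∈ ℬ m, ∀ y ∈ ℬ n, x * y ∈ ℬ (m + n))
  {Kneg Kpos : Submodule R K} (hsplit : IsCompl Kneg Kpos)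
  (hKnegMul : ∀ x ∈ Kneg, ∀ y ∈ Kneg, x * y ∈ Kneg)
  (hKposMul : ∀ x ∈ Kpos, ∀ y ∈ Kpos, x * y ∈ Kpos)
include hmul hKnegMul hKposMul

theorem map_mul_of_mem_of_bogoliubovMap_eq {γ : H →ₐ[R] K} {X : H →ₗ[R] K}
    (hX : bogoliubovMap (Kneg.projection Kpos hsplit) γ X = X) {m n : ℕ} {x y : H}
    (hx : x ∈ ℬ m) (hy : y ∈ ℬ n) : X (x * y) = X x * X y := by
  induction hN : m + n using Nat.strong_induction_on generalizing m n x y with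
  | _ N ih =>
    subst hN
    rcases eq_or_ne m 0 with rfl | hm
    · obtain ⟨c, rfl⟩ := Submodule.mem_one.mp (hconn ▸ hx)
      rw [Algebra.algebraMap_eq_smul_one, smul_mul_assoc, one_mul, map_smul, map_smul,
        map_one_of_bogoliubovMap_eq hX, smul_mul_assoc, one_mul]
    rcases eq_or_ne n 0 with rfl | hn
    · obtain ⟨c, rfl⟩ := Submodule.mem_one.mp (hconn ▸ hy)
      rw [Algebra.algebraMap_eq_smul_one, mul_smul_comm, mul_one, map_smul, map_smul,
        map_one_of_bogoliubovMap_eq hX, mul_smul_comm, mul_one]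
    have hfix : ∀ {k z}, k ≠ 0 → z ∈ ℬ k →
        X z = -Kneg.projection Kpos hsplit (bogoliubovPreparation γ X z) := fun hk hz => by
      rw [apply_eq_of_bogoliubovMap_eq hX, counit_eq_zero_of_mem hℬ hconn hcomul hk hz, map_zero,
        zero_sub]
    have hP := bogoliubovPreparation_apply_mul hℬ hconn hcomul γ
      (fun p p' h a ha c hc => ih (p + p') h ha hc rfl) hx hy
    rw [hfix (by omega) (hmul m n x hx y hy), hP, hfix hm hx, hfix hn hy, neg_mul_neg]
    conv_rhs => rw [Submodule.projection_mul_projection hsplit hKnegMul hKposMul]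
    rw [← map_neg]
    congr 1
    ring

theorem map_mul_of_bogoliubovMap_eq {γ : H →ₐ[R] K} {X : H →ₗ[R] K}
    (hX : bogoliubovMap (Kneg.projection Kpos hsplit) γ X = X) (x y : H) :
    X (x * y) = X x * X y := by
  have h : (LinearMap.mul R H).compr₂ X = (LinearMap.mul R K).compl₁₂ X X :=
    hℬ.linearMap_ext fun m x hx => hℬ.linearMap_ext fun n y hy => by
      simpa using map_mul_of_mem_of_bogoliubovMap_eq hℬ hconn hcomul hmul hsplit hKnegMul hKposMul
        hX hx hy
  exact LinearMap.congr_fun₂ h x y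

end Bogoliubov

/-- Connes–Kreimer: Let `H` be a connected graded commutative Hopf
algebra over ℂ and `K` a commutative ℂ-algebra with a splitting `K = K₋ ⊕ K₊` into
(non-unital resp. unital) subalgebras.  Every algebra homomorphism `γ : H → K` admits a
Birkhoff decomposition `γ = (γ₋ ∘ S) ⋆ γ₊`, where `γ₋, γ₊` are algebra homomorphisms,
`γ₋` takes values in `ℂ ⊕ K₋` (so `γ₋(Γ) ∈ K₋` for `Γ` in the augmentation ideal) and
`γ₊` takes values in `K₊`. -/
theorem birkhoff_decomposition_exists
    (H : Type*) [CommRing H] [HopfAlgebra ℂ H]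
    (ℬ : ℕ → Submodule ℂ H)
    (hinternal : DirectSum.IsInternal ℬ)
    (hconn : ℬ 0 = (1 : Submodule ℂ H))
    (hmul : ∀ m n : ℕ, ∀ x ∈ ℬ m, ∀ y ∈ ℬ n, x * y ∈ ℬ (m + n))
    (hcomul : ∀ n : ℕ, ∀ x ∈ ℬ n,
      Coalgebra.comul (R := ℂ) x ∈
        ⨆ (p : ℕ × ℕ) (_ : p.1 + p.2 = n),
          LinearMap.range (TensorProduct.map (ℬ p.1).subtype (ℬ p.2).subtype))
    (K : Type*) [CommRing K] [Algebra ℂ K]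
    (Kneg Kpos : Submodule ℂ K)
    (hsplit : IsCompl Kneg Kpos)
    (hKnegMul : ∀ x ∈ Kneg, ∀ y ∈ Kneg, x * y ∈ Kneg)
    (hKposMul : ∀ x ∈ Kpos, ∀ y ∈ Kpos, x * y ∈ Kpos)
    (hKposOne : (1 : K) ∈ Kpos)
    (γ : H →ₐ[ℂ] K) :
    ∃ (γm γp : H →ₐ[ℂ] K),
      (∀ x : H, γm x - algebraMap ℂ K (Coalgebra.counit (R := ℂ) x) ∈ Kneg) ∧
      (∀ x : H, γp x ∈ Kpos) ∧
      (∀ x : H, γ x =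
        LinearMap.mul' ℂ K
          (TensorProduct.map (γm.toLinearMap ∘ₗ HopfAlgebra.antipode (R := ℂ))
            γp.toLinearMap (Coalgebra.comul (R := ℂ) x))) := by
  obtain ⟨X, hX⟩ := exists_bogoliubovMap_eq hinternal hconn hcomul (Kneg.projection Kpos hsplit) γ
  let γm : H →ₐ[ℂ] K := .ofLinearMap X (map_one_of_bogoliubovMap_eq hX)
    (map_mul_of_bogoliubovMap_eq hinternal hconn hcomul hmul hsplit hKnegMul hKposMul hX)
  refine ⟨γm, (toConv γm * toConv γ).ofConv, sub_counit_mem_of_bogoliubovMap_eq hsplit hX,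
    convMul_apply_mem_of_bogoliubovMap_eq hsplit hKposOne hX, fun x => ?_⟩
  change γ x = (toConv (γm.toLinearMap ∘ₗ HopfAlgebra.antipode ℂ) *
    toConv (toConv γm * toConv γ).ofConv.toLinearMap) x
  rw [AlgHom.toLinearMap_convMul, ← mul_assoc, AlgHom.toConv_comp_antipode_mul_toConv, one_mul]
  rfl
end

section
/- In the Faà di Bruno-type Hopf algebra H generated by elements Y_1,...,Y_k (in the completed sense, with Y_j = Σ_{n∈ℕ^k} p_n(Y_j) graded by multidegree n ∈ ℕ^k and p_{0}(Y_j) = 1), with coproduct Δ(Y_j) = Σ_{n∈ℕ^k} Y_j Y_1^{n_1}···Y_k^{n_k} ⊗ p_n(Y_j), the coproduct is coassociative. -/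
open scoped TensorProduct
noncomputable section

/-- Multidegrees `n ∈ ℕ^k`. -/
abbrev Md (k : ℕ) := Fin k →₀ ℕ

/-- The Faà di Bruno-type Hopf algebra: the free commutative ℂ-algebra on generators
`pₙ(Y_j)` for `j = 1,…,k` and `n ∈ ℕ^k \ {0}`. -/
abbrev FdB (k : ℕ) := MvPolynomial (Fin k × {n : Md k // n ≠ 0}) ℂ

/-- The generator `pₙ(Y_j)`, with `p₀(Y_j) = 1`. -/
def Pgen (k : ℕ) (j : Fin k) (n : Md k) : FdB k :=
  if h : n = 0 then 1 else MvPolynomial.X (j, ⟨n, h⟩)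

/-- The formal series `Y_j = Σ_n pₙ(Y_j)`, recorded by its multidegree components. -/
def Yser (k : ℕ) (j : Fin k) : MvPowerSeries (Fin k) (FdB k) :=
  fun n => Pgen k j n

/-- The coproduct, defined on generators by the multidegree-`n` components of the formal
identity `Δ(Y_j) = Σ_n Y_j·Y₁^(n₁)···Y_k^(n_k) ⊗ pₙ(Y_j)`:
`Δ(p_m(Y_j)) = Σ_{a+b=m} p_a(Y_j·Y₁^(b₁)···Y_k^(b_k)) ⊗ p_b(Y_j)`. -/
def FdBcomul (k : ℕ) : FdB k →ₐ[ℂ] FdB k ⊗[ℂ] FdB k :=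
  MvPolynomial.aeval (fun p : Fin k × {n : Md k // n ≠ 0} =>
    ∑ ab ∈ Finset.HasAntidiagonal.antidiagonal (p.2 : Md k),
      (MvPowerSeries.coeff (R := FdB k) ab.1
          (Yser k p.1 * ∏ i, (Yser k i) ^ ((ab.2 : Md k) i))) ⊗ₜ[ℂ] Pgen k p.1 ab.2)

/-!
Call a series `S` compatible with `Δ` when `Δ(S) = Σ_n S·Y^n ⊗ p_n(S)` holds coefficientwise,
where `Y^n = Y₁^(n₁)⋯Y_k^(n_k)`. The generators `Y_j` are compatible by the definition of `Δ`,
and compatibility is preserved under products because `Y^(u+v) = Y^u·Y^v`; hence every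
`Y_j·Y^n` is compatible. Applying compatibility twice to `p_a(Y_j)` then turns both sides of
coassociativity into the same sum `Σ p_{a₁}(Y_j·Y^(a₂+a₃)) ⊗ p_{a₂}(Y_j·Y^(a₃)) ⊗ p_{a₃}(Y_j)`
over `a₁ + a₂ + a₃ = a`.
-/

open Finset MvPowerSeries

namespace FaaDiBruno

section Antidiagonal

variable {A M : Type*} [AddCommMonoid M]

theorem sum_antidiagonal_antidiagonal_fst [AddMonoid A] [HasAntidiagonal A] (m : A)
    (f : A → A → A → M) :
    ∑ p ∈ antidiagonal m, ∑ q ∈ antidiagonal p.1, f q.1 q.2 p.2 =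
      ∑ p ∈ antidiagonal m, ∑ q ∈ antidiagonal p.2, f p.1 q.1 q.2 := by
  simp only [sum_sigma']
  apply sum_nbij' (fun x => ⟨(x.2.1, x.2.2 + x.1.2), (x.2.2, x.1.2)⟩)
    (fun y => ⟨(y.1.1 + y.2.1, y.2.2), (y.1.1, y.2.1)⟩) <;>
    aesop (add simp [add_assoc])

theorem sum_antidiagonal_medial [AddCommMonoid A] [HasAntidiagonal A] (m : A)
    (f : A → A → A → A → M) :
    ∑ p ∈ antidiagonal m, ∑ q ∈ antidiagonal p.1, ∑ r ∈ antidiagonal p.2, f q.1 q.2 r.1 r.2 =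
      ∑ p ∈ antidiagonal m, ∑ q ∈ antidiagonal p.1, ∑ r ∈ antidiagonal p.2,
        f q.1 r.1 q.2 r.2 := by
  simp only [sum_sigma']
  apply sum_nbij'
    (fun x => ⟨(x.2.1.1 + x.2.2.1, x.2.1.2 + x.2.2.2), (x.2.1.1, x.2.2.1), (x.2.1.2, x.2.2.2)⟩)
    (fun x => ⟨(x.2.1.1 + x.2.2.1, x.2.1.2 + x.2.2.2), (x.2.1.1, x.2.2.1), (x.2.1.2, x.2.2.2)⟩) <;>
    aesop (add simp [add_add_add_comm])

end Antidiagonal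

section Comul

variable {R A σ : Type*} [CommSemiring R] [CommSemiring A] [Algebra R A] [Fintype σ]

def prodPow (Y : σ → MvPowerSeries σ A) (b : σ →₀ ℕ) : MvPowerSeries σ A :=
  ∏ i, Y i ^ b i

variable {Y : σ → MvPowerSeries σ A}

@[simp]
theorem prodPow_zero : prodPow Y 0 = 1 := by
  simp [prodPow]

theorem prodPow_add (b c : σ →₀ ℕ) : prodPow Y (b + c) = prodPow Y b * prodPow Y c := by
  simp only [prodPow, Finsupp.add_apply, pow_add, prod_mul_distrib]

variable [DecidableEq σ]

def IsComulCompatible (Δ : A →ₐ[R] A ⊗[R] A) (Y : σ → MvPowerSeries σ A)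
    (S : MvPowerSeries σ A) : Prop :=
  ∀ a, Δ (coeff a S) = ∑ p ∈ antidiagonal a, coeff p.1 (S * prodPow Y p.2) ⊗ₜ coeff p.2 S

theorem isComulCompatible_one (Δ : A →ₐ[R] A ⊗[R] A) (Y : σ → MvPowerSeries σ A) :
    IsComulCompatible Δ Y 1 := by
  intro a
  rw [sum_eq_single_of_mem (a, 0) (mem_antidiagonal.mpr (add_zero a))]
  · rw [one_mul, prodPow_zero, coeff_zero_one, coeff_one]
    split_ifs <;> simp [Algebra.TensorProduct.one_def]
  · rintro ⟨b, c⟩ hbc hne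
    have hc : c ≠ 0 := by
      rintro rfl
      exact hne (by rw [← add_zero b, ← mem_antidiagonal.mp hbc])
    rw [coeff_one, if_neg hc, TensorProduct.tmul_zero]

variable {Δ : A →ₐ[R] A ⊗[R] A}

theorem IsComulCompatible.mul {S T : MvPowerSeries σ A} (hS : IsComulCompatible Δ Y S)
    (hT : IsComulCompatible Δ Y T) : IsComulCompatible Δ Y (S * T) := by
  intro a
  have hST (u v : σ →₀ ℕ) : S * T * prodPow Y (u + v) = S * prodPow Y u * (T * prodPow Y v) := by
    rw [prodPow_add]; ring
  calc Δ (coeff a (S * T))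
      = ∑ p ∈ antidiagonal a, ∑ q ∈ antidiagonal p.1, ∑ r ∈ antidiagonal p.2,
          (coeff q.1 (S * prodPow Y q.2) * coeff r.1 (T * prodPow Y r.2)) ⊗ₜ
            (coeff q.2 S * coeff r.2 T) := by
        rw [coeff_mul, map_sum]
        refine sum_congr rfl fun p _ => ?_
        simp only [map_mul, hS p.1, hT p.2, sum_mul_sum, Algebra.TensorProduct.tmul_mul_tmul]
    _ = ∑ p ∈ antidiagonal a, ∑ q ∈ antidiagonal p.1, ∑ r ∈ antidiagonal p.2,
          (coeff q.1 (S * prodPow Y r.1) * coeff q.2 (T * prodPow Y r.2)) ⊗ₜ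
            (coeff r.1 S * coeff r.2 T) :=
        sum_antidiagonal_medial a fun s₁ s₂ t₁ t₂ =>
          (coeff s₁ (S * prodPow Y s₂) * coeff t₁ (T * prodPow Y t₂)) ⊗ₜ
            (coeff s₂ S * coeff t₂ T)
    _ = ∑ p ∈ antidiagonal a, coeff p.1 (S * T * prodPow Y p.2) ⊗ₜ coeff p.2 (S * T) := by
        refine sum_congr rfl fun p _ => ?_
        rw [sum_comm, coeff_mul (φ := S), TensorProduct.tmul_sum]
        refine sum_congr rfl fun r hr => ?_
        rw [← mem_antidiagonal.mp hr, hST, coeff_mul, TensorProduct.sum_tmul]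

def comulSubmonoid (Δ : A →ₐ[R] A ⊗[R] A) (Y : σ → MvPowerSeries σ A) :
    Submonoid (MvPowerSeries σ A) where
  carrier := {S | IsComulCompatible Δ Y S}
  mul_mem' := IsComulCompatible.mul
  one_mem' := isComulCompatible_one Δ Y

theorem mul_prodPow_mem_comulSubmonoid (hY : ∀ i, Y i ∈ comulSubmonoid Δ Y)
    {S : MvPowerSeries σ A} (hS : S ∈ comulSubmonoid Δ Y) (b : σ →₀ ℕ) :
    S * prodPow Y b ∈ comulSubmonoid Δ Y :=
  mul_mem hS (prod_mem fun i _ => pow_mem (hY i) (b i))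

theorem coassoc_coeff {S : MvPowerSeries σ A}
    (hS : ∀ b, IsComulCompatible Δ Y (S * prodPow Y b)) (a : σ →₀ ℕ) :
    Algebra.TensorProduct.assoc R R R A A A
        (Algebra.TensorProduct.map Δ (AlgHom.id R A) (Δ (coeff a S))) =
      Algebra.TensorProduct.map (AlgHom.id R A) Δ (Δ (coeff a S)) := by
  have hS₀ : IsComulCompatible Δ Y S := by simpa using hS 0
  calc _ = ∑ p ∈ antidiagonal a, ∑ q ∈ antidiagonal p.1,
          coeff q.1 (S * prodPow Y p.2 * prodPow Y q.2) ⊗ₜ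
            (coeff q.2 (S * prodPow Y p.2) ⊗ₜ coeff p.2 S) := by
        rw [hS₀ a, map_sum, map_sum]
        refine sum_congr rfl fun p _ => ?_
        rw [Algebra.TensorProduct.map_tmul, AlgHom.id_apply, hS p.2, TensorProduct.sum_tmul,
          map_sum]
        rfl
    _ = ∑ p ∈ antidiagonal a, ∑ q ∈ antidiagonal p.2,
          coeff p.1 (S * prodPow Y q.2 * prodPow Y q.1) ⊗ₜ
            (coeff q.1 (S * prodPow Y q.2) ⊗ₜ coeff q.2 S) :=
        sum_antidiagonal_antidiagonal_fst a fun x y z =>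
          coeff x (S * prodPow Y z * prodPow Y y) ⊗ₜ (coeff y (S * prodPow Y z) ⊗ₜ coeff z S)
    _ = _ := by
        rw [hS₀ a, map_sum]
        refine sum_congr rfl fun p _ => ?_
        rw [Algebra.TensorProduct.map_tmul, AlgHom.id_apply, hS₀ p.2, TensorProduct.tmul_sum]
        refine sum_congr rfl fun q hq => ?_
        rw [mul_assoc, ← prodPow_add, add_comm, mem_antidiagonal.mp hq]

end Comul

theorem coeff_Yser (k : ℕ) (j : Fin k) (n : Md k) : coeff n (Yser k j) = Pgen k j n := rfl

theorem isComulCompatible_Yser (k : ℕ) (j : Fin k) :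
    IsComulCompatible (FdBcomul k) (Yser k) (Yser k j) := by
  intro n
  by_cases hn : n = 0
  · subst hn
    rw [Finsupp.antidiagonal_zero, sum_singleton, prodPow_zero, mul_one, coeff_Yser, Pgen,
      dif_pos rfl, map_one, Algebra.TensorProduct.one_def]
  · rw [coeff_Yser, Pgen, dif_neg hn, FdBcomul, MvPolynomial.aeval_X]
    rfl

end FaaDiBruno

open FaaDiBruno

/-- the Faà di Bruno-type coproduct
`Δ(Y_j) = Σ_n Y_j Y₁^(n₁)···Y_k^(n_k) ⊗ pₙ(Y_j)` is coassociative: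
`(Δ⊗id)∘Δ = (id⊗Δ)∘Δ`. -/
theorem FdBcomul_coassoc (k : ℕ) : ∀ x : FdB k,
    (Algebra.TensorProduct.assoc ℂ ℂ ℂ (FdB k) (FdB k) (FdB k))
        ((Algebra.TensorProduct.map (FdBcomul k) (AlgHom.id ℂ (FdB k))) (FdBcomul k x)) =
      (Algebra.TensorProduct.map (AlgHom.id ℂ (FdB k)) (FdBcomul k)) (FdBcomul k x) := by
  suffices (Algebra.TensorProduct.assoc ℂ ℂ ℂ (FdB k) (FdB k) (FdB k)).toAlgHom.comp
      ((Algebra.TensorProduct.map (FdBcomul k) (AlgHom.id ℂ (FdB k))).comp (FdBcomul k)) =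
      (Algebra.TensorProduct.map (AlgHom.id ℂ (FdB k)) (FdBcomul k)).comp (FdBcomul k) from
    fun x => DFunLike.congr_fun this x
  refine MvPolynomial.algHom_ext fun ⟨j, n⟩ => ?_
  have hX : MvPolynomial.X (j, n) = coeff n.1 (Yser k j) := by
    rw [coeff_Yser, Pgen, dif_neg n.2]
  have hY : ∀ i, Yser k i ∈ comulSubmonoid (FdBcomul k) (Yser k) := isComulCompatible_Yser k
  simpa [hX] using coassoc_coeff (mul_prodPow_mem_comulSubmonoid hY (hY j)) n.1
end
end

section
/- Let I be the ideal of ℂ[[λ_1,...,λ_5]] generated by λ_1 - λ_2, λ_2 - λ_3, and λ_3 - λ_4^2 (equivalently, setting g := λ_1, by λ_i - g^{N_i - 2} for i = 1,...,4 with N_1 = N_2 = N_3 = 3, N_4 = 4). Let Diff(ℂ^5,0)^I be the subgroup of formal diffeomorphisms f ∈ Diff(ℂ^5,0) with f(I) ⊆ I. Then there is a short exact sequence 1 → (1+I)^5 → Diff(ℂ^5,0)^I → Diff(ℂ^2,0) → 1, where (1+I)^5 acts by f(λ_j) = λ_j(1 + B_j) with B_j ∈ I, the surjection is induced by passing to the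 quotient ℂ[[λ_1,...,λ_5]]/I ≅ ℂ[[g, λ_5]], and moreover this sequence splits. -/
/-!
All substitutions that occur have components without constant term, so the coefficient
formulas `subst5`, `subst2` and `toTwoVars` agree with `MvPowerSeries.subst`, an algebra map
compatible with composition. The projection is the substitution
`π : g ↦ g, λᵢ ↦ g ^ (Nᵢ - 2), λ₅ ↦ λ₅`, and a diffeomorphism `f` preserving `I` satisfies
`π ∘ f = projDiff f ∘ π`, which makes `projDiff` multiplicative.

The kernel of `π` is exactly `I`: after the triangular change of variables
`λᵢ ↦ λᵢ - g ^ (Nᵢ - 2)`, the retraction `ι ∘ π` onto `ℂ[[g, λ₅]]` becomes "set `λ₂, λ₃, λ₄`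
to zero", and what that discards lies in `(λ₂, λ₃, λ₄)`. Hence `f = (λ_j u_j)` is in the kernel
of `projDiff` iff every `u_j` is `1` modulo `I`, since `π λ_j` is a monomial, so cancellable.

The splitting sends `(g u₀, λ₅ u₁)` to `λ_j ↦ λ_j u₀ ^ (N_j - 2)` for `j ≤ 4` and
`λ₅ ↦ λ₅ u₁`, reading `u₀, u₁` in `ℂ[[g, λ₅]] ⊆ ℂ[[λ]]`. It preserves the relations
`λᵢ = g ^ (Nᵢ - 2)`, and it commutes with composition because on `ℂ[[g, λ₅]]` it acts as the
given diffeomorphism.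
-/

noncomputable section

abbrev A5 := MvPowerSeries (Fin 5) ℂ
abbrev A2 := MvPowerSeries (Fin 2) ℂ

/-- Substitution of a 5-tuple of series into a series in 5 variables. -/
def subst5 (s : A5) (g : Fin 5 → A5) : A5 :=
  fun m => ∑ᶠ n : Fin 5 →₀ ℕ, MvPowerSeries.coeff n s *
    MvPowerSeries.coeff m (∏ j, (g j) ^ (n j))

/-- Substitution of a 2-tuple of series into a series in 2 variables. -/
def subst2 (s : A2) (g : Fin 2 → A2) : A2 :=
  fun m => ∑ᶠ n : Fin 2 →₀ ℕ, MvPowerSeries.coeff n s *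
    MvPowerSeries.coeff m (∏ j, (g j) ^ (n j))

/-- `Diff(ℂ⁵,0)`: tuples `f_j(λ) = λ_j·(1 + higher order)`; group under composition. -/
def IsDiff5 (f : Fin 5 → A5) : Prop :=
  ∀ j, ∃ u : A5, MvPowerSeries.constantCoeff u = 1 ∧
    f j = MvPowerSeries.X j * u

/-- `Diff(ℂ²,0)` in the variables `(g, λ₅)`. -/
def IsDiff2 (f : Fin 2 → A2) : Prop :=
  ∀ j, ∃ u : A2, MvPowerSeries.constantCoeff u = 1 ∧
    f j = MvPowerSeries.X j * u

/-- Composition of formal diffeomorphisms (substitution of `g` into `f`). -/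
def compDiff5 (f g : Fin 5 → A5) : Fin 5 → A5 := fun j => subst5 (f j) g

def compDiff2 (f g : Fin 2 → A2) : Fin 2 → A2 := fun j => subst2 (f j) g

/-- The ideal `I = (λ_i - g^(N_i-2) : i = 2,3,4)`, `g := λ₁`. -/
def idealI (N : Fin 5 → ℕ) : Ideal A5 :=
  Ideal.span {x | ∃ i : Fin 5, i ∈ ({1, 2, 3} : Set (Fin 5)) ∧
    x = MvPowerSeries.X i - (MvPowerSeries.X 0 : A5) ^ (N i - 2)}

/-- The subgroup `Diff(ℂ⁵,0)^I` of diffeomorphisms preserving the ideal `I`. -/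
def IsDiffI (N : Fin 5 → ℕ) (f : Fin 5 → A5) : Prop :=
  IsDiff5 f ∧ ∀ x ∈ idealI N, subst5 x f ∈ idealI N

/-- The map to two variables induced by the quotient
`ℂ[[λ₁,…,λ₅]]/I ≅ ℂ[[g,λ₅]]`: substitute `λ_i ↦ g^(N_i-2)` (`i=1,…,4`), `λ₅ ↦ λ₅`. -/
def toTwoVars (N : Fin 5 → ℕ) (s : A5) : A2 :=
  fun m => ∑ᶠ n : Fin 5 →₀ ℕ, MvPowerSeries.coeff n s *
    MvPowerSeries.coeff m (∏ j,
      (if j = 4 then (MvPowerSeries.X 1 : A2)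
        else (MvPowerSeries.X 0 : A2) ^ (N j - 2)) ^ (n j))

/-- The induced projection `Diff(ℂ⁵,0)^I → Diff(ℂ²,0)`. -/
def projDiff (N : Fin 5 → ℕ) (f : Fin 5 → A5) : Fin 2 → A2 :=
  fun b => if b = 0 then toTwoVars N (f 0) else toTwoVars N (f 4)

open MvPowerSeries

namespace MvPowerSeries

section Generic

variable {σ τ R : Type*} [CommRing R]

theorem subst_eq_finsum [Fintype σ] {a : σ → MvPowerSeries τ R} (ha : HasSubst a)
    (f : MvPowerSeries σ R) :
    subst a f = fun m => ∑ᶠ n : σ →₀ ℕ, coeff n f * coeff m (∏ j, a j ^ n j) := by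
  ext m
  rw [coeff_subst ha]
  simp only [pow_zero, implies_true, Finsupp.prod_fintype, smul_eq_mul]
  rfl

theorem constantCoeff_subst_of_constantCoeff_eq_zero [Finite σ] {a : σ → MvPowerSeries τ R}
    (ha : ∀ i, constantCoeff (a i) = 0) (f : MvPowerSeries σ R) :
    constantCoeff (subst a f) = constantCoeff f := by
  have hs := hasSubst_of_constantCoeff_zero ha
  have hf : f = C (constantCoeff f) + (f - C (constantCoeff f)) := by ring
  rw [hf, subst_add hs, map_add, subst_C, constantCoeff_subst_eq_zero hs ha (by simp)]
  simp

def divX (i : σ) (f : MvPowerSeries σ R) : MvPowerSeries σ R :=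
  fun m => coeff (Finsupp.single i 1 + m) f

theorem coeff_divX (i : σ) (f : MvPowerSeries σ R) (m : σ →₀ ℕ) :
    coeff m (divX i f) = coeff (Finsupp.single i 1 + m) f :=
  rfl

theorem divX_X_mul (i : σ) (u : MvPowerSeries σ R) : divX i (X i * u) = u := by
  ext m
  rw [coeff_divX, X_def, coeff_add_monomial_mul, one_mul]

theorem coeff_sub_X_mul_divX [DecidableEq σ] (i : σ) (t : MvPowerSeries σ R) (n : σ →₀ ℕ) :
    coeff n (t - X i * divX i t) = if n i = 0 then coeff n t else 0 := by
  rw [map_sub, X_def, coeff_monomial_mul]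
  by_cases hni : n i = 0
  · have : ¬ Finsupp.single i 1 ≤ n := by simp [Finsupp.single_le_iff, hni]
    simp [hni, this]
  · have hle : Finsupp.single i 1 ≤ n := Finsupp.single_le_iff.2 (by omega)
    simp [hni, hle, coeff_divX, add_tsub_cancel_of_le hle]

theorem mem_span_X_image_of_coeff_eq_zero [DecidableEq σ] (s : Finset σ) (t : MvPowerSeries σ R)
    (h : ∀ n : σ →₀ ℕ, (∀ i ∈ s, n i = 0) → coeff n t = 0) :
    t ∈ Ideal.span (X '' (s : Set σ)) := by
  induction s using Finset.induction_on generalizing t with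
  | empty => simpa using! (show t = 0 from ext fun n => by simpa using h n)
  | insert i s hi ih =>
    have ht₀ : t - X i * divX i t ∈ Ideal.span (X '' (s : Set σ)) := ih _ fun n hn => by
      rw [coeff_sub_X_mul_divX]
      split_ifs with hni
      · exact h n (by simpa [hni] using hn)
      · rfl
    have hspan : Ideal.span ((X : σ → MvPowerSeries σ R) '' s) ≤
        Ideal.span (X '' ↑(insert i s)) :=
      Ideal.span_mono (Set.image_mono (by simp))
    rw [show t = X i * divX i t + (t - X i * divX i t) by ring]
    exact Ideal.add_mem _ (Ideal.mul_mem_right _ _ (Ideal.subset_span ⟨i, by simp, rfl⟩))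
      (hspan ht₀)

theorem sub_rescale_mem_span_X [DecidableEq σ] (s : Finset σ) (t : MvPowerSeries σ R) :
    t - rescale (fun i => if i ∈ s then 0 else 1) t ∈ Ideal.span (X '' (s : Set σ)) := by
  refine mem_span_X_image_of_coeff_eq_zero s _ fun n hn => ?_
  have : (n.prod fun i m => (if i ∈ s then (0 : R) else 1) ^ m) = 1 :=
    Finset.prod_eq_one fun i hi => by
      have : i ∉ s := fun his => (Finsupp.mem_support_iff.1 hi) (hn i his)
      simp [this]
  rw [map_sub, coeff_rescale, this, one_mul, sub_self]

theorem subst_mem_of_mem_span {a : σ → MvPowerSeries τ R} (ha : HasSubst a)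
    {S : Set (MvPowerSeries σ R)} {J : Ideal (MvPowerSeries τ R)} (hS : ∀ x ∈ S, subst a x ∈ J)
    {x : MvPowerSeries σ R} (hx : x ∈ Ideal.span S) : subst a x ∈ J := by
  have : Ideal.span S ≤ J.comap (substAlgHom ha) :=
    Ideal.span_le.2 fun x hxS => by simpa using hS x hxS
  simpa using this hx

theorem HasSubst.comp_subst {υ : Type*} {a : σ → MvPowerSeries τ R}
    {b : τ → MvPowerSeries υ R} (ha : HasSubst a) (hb : HasSubst b) :
    HasSubst fun s => subst b (a s) := by
  simpa only [substAlgHom_apply] using ha.comp hb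

def IsDiff (f : σ → MvPowerSeries σ R) : Prop :=
  ∀ j, ∃ u : MvPowerSeries σ R, constantCoeff u = 1 ∧ f j = X j * u

theorem IsDiff.constantCoeff_eq_zero {f : σ → MvPowerSeries σ R} (hf : IsDiff f) (j : σ) :
    constantCoeff (f j) = 0 := by
  obtain ⟨u, -, hj⟩ := hf j
  simp [hj]

theorem IsDiff.hasSubst [Finite σ] {f : σ → MvPowerSeries σ R} (hf : IsDiff f) : HasSubst f :=
  hasSubst_of_constantCoeff_zero hf.constantCoeff_eq_zero

theorem subst_X_mul_eq {g : σ → MvPowerSeries σ R} (hg : HasSubst g) {j : σ}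
    {v : MvPowerSeries σ R} (hgj : g j = X j * v) (u : MvPowerSeries σ R) :
    subst g (X j * u) = X j * (v * subst g u) := by
  rw [subst_mul hg, subst_X hg, hgj, mul_assoc]

theorem IsDiff.comp [Finite σ] {f g : σ → MvPowerSeries σ R} (hf : IsDiff f) (hg : IsDiff g) :
    IsDiff fun j => subst g (f j) := fun j => by
  obtain ⟨u, hu, hfj⟩ := hf j
  obtain ⟨v, hv, hgj⟩ := hg j
  refine ⟨v * subst g u, ?_, by simp only [hfj, subst_X_mul_eq hg.hasSubst hgj]⟩
  rw [map_mul, constantCoeff_subst_of_constantCoeff_eq_zero hg.constantCoeff_eq_zero, hu, hv,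
    one_mul]

end Generic

end MvPowerSeries

namespace DiffI

variable {N : Fin 5 → ℕ}

theorem subst5_eq_subst {g : Fin 5 → A5} (hg : HasSubst g) (s : A5) : subst5 s g = subst g s :=
  (subst_eq_finsum hg s).symm

theorem subst2_eq_subst {g : Fin 2 → A2} (hg : HasSubst g) (s : A2) : subst2 s g = subst g s :=
  (subst_eq_finsum hg s).symm

theorem compDiff5_eq {f g : Fin 5 → A5} (hg : HasSubst g) :
    compDiff5 f g = fun j => subst g (f j) :=
  funext fun j => subst5_eq_subst hg (f j)

theorem compDiff2_eq {f g : Fin 2 → A2} (hg : HasSubst g) :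
    compDiff2 f g = fun j => subst g (f j) :=
  funext fun j => subst2_eq_subst hg (f j)

variable (N) in
def toTwoVarsFamily : Fin 5 → A2 := fun j =>
  if j = 4 then X 1 else X 0 ^ (N j - 2)

theorem toTwoVarsFamily_four : toTwoVarsFamily N 4 = X 1 := rfl

theorem toTwoVarsFamily_of_ne_four {j : Fin 5} (hj : j ≠ 4) :
    toTwoVarsFamily N j = X 0 ^ (N j - 2) := if_neg hj

theorem toTwoVarsFamily_zero (hN0 : N 0 = 3) : toTwoVarsFamily N 0 = X 0 := by
  rw [toTwoVarsFamily_of_ne_four (by decide), hN0, pow_one]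

theorem constantCoeff_toTwoVarsFamily (hN0 : N 0 = 3)
    (hN : ∀ i ∈ ({1, 2, 3} : Finset (Fin 5)), 3 ≤ N i) (j : Fin 5) :
    constantCoeff (toTwoVarsFamily N j) = 0 := by
  have h : j ≠ 4 → N j - 2 ≠ 0 := by
    fin_cases j <;> simp at hN ⊢ <;> omega
  by_cases hj : j = 4
  · rw [hj, toTwoVarsFamily_four, constantCoeff_X]
  · rw [toTwoVarsFamily_of_ne_four hj, map_pow, constantCoeff_X, zero_pow (h hj)]

theorem hasSubst_toTwoVarsFamily (hN0 : N 0 = 3)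
    (hN : ∀ i ∈ ({1, 2, 3} : Finset (Fin 5)), 3 ≤ N i) : HasSubst (toTwoVarsFamily N) :=
  hasSubst_of_constantCoeff_zero (constantCoeff_toTwoVarsFamily hN0 hN)

theorem toTwoVars_eq_subst (hN0 : N 0 = 3) (hN : ∀ i ∈ ({1, 2, 3} : Finset (Fin 5)), 3 ≤ N i)
    (s : A5) : toTwoVars N s = subst (toTwoVarsFamily N) s :=
  (subst_eq_finsum (hasSubst_toTwoVarsFamily hN0 hN) s).symm

theorem toTwoVars_X_mul (hN0 : N 0 = 3) (hN : ∀ i ∈ ({1, 2, 3} : Finset (Fin 5)), 3 ≤ N i)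
    (j : Fin 5) (u : A5) : toTwoVars N (X j * u) = toTwoVarsFamily N j * toTwoVars N u := by
  have hπ := hasSubst_toTwoVarsFamily hN0 hN
  rw [toTwoVars_eq_subst hN0 hN, toTwoVars_eq_subst hN0 hN, subst_mul hπ, subst_X hπ]

theorem toTwoVars_X (hN0 : N 0 = 3) (hN : ∀ i ∈ ({1, 2, 3} : Finset (Fin 5)), 3 ≤ N i)
    (j : Fin 5) : toTwoVars N (X j) = toTwoVarsFamily N j := by
  rw [toTwoVars_eq_subst hN0 hN, subst_X (hasSubst_toTwoVarsFamily hN0 hN)]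

theorem constantCoeff_toTwoVars (hN0 : N 0 = 3)
    (hN : ∀ i ∈ ({1, 2, 3} : Finset (Fin 5)), 3 ≤ N i) (u : A5) :
    constantCoeff (toTwoVars N u) = constantCoeff u := by
  rw [toTwoVars_eq_subst hN0 hN,
    constantCoeff_subst_of_constantCoeff_eq_zero (constantCoeff_toTwoVarsFamily hN0 hN)]

theorem toTwoVars_eq_zero_of_mem (hN0 : N 0 = 3)
    (hN : ∀ i ∈ ({1, 2, 3} : Finset (Fin 5)), 3 ≤ N i) {x : A5} (hx : x ∈ idealI N) :
    toTwoVars N x = 0 := by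
  have hπ := hasSubst_toTwoVarsFamily hN0 hN
  rw [toTwoVars_eq_subst hN0 hN, ← Ideal.mem_bot]
  refine subst_mem_of_mem_span hπ ?_ hx
  rintro _ ⟨i, hi, rfl⟩
  have hi4 : i ≠ 4 := by rintro rfl; simp at hi
  rw [Ideal.mem_bot, subst_sub hπ, subst_pow hπ, subst_X hπ, subst_X hπ,
    toTwoVarsFamily_of_ne_four hi4, toTwoVarsFamily_zero hN0, sub_self]

def ofTwoVarsFamily : Fin 2 → A5 := ![X 0, X 4]

theorem constantCoeff_ofTwoVarsFamily (b : Fin 2) : constantCoeff (ofTwoVarsFamily b) = 0 := by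
  fin_cases b <;> simp [ofTwoVarsFamily]

theorem hasSubst_ofTwoVarsFamily : HasSubst ofTwoVarsFamily :=
  hasSubst_of_constantCoeff_zero constantCoeff_ofTwoVarsFamily

def ofTwoVars : A2 →ₐ[ℂ] A5 := substAlgHom hasSubst_ofTwoVarsFamily

theorem ofTwoVars_apply (s : A2) : ofTwoVars s = subst ofTwoVarsFamily s :=
  substAlgHom_apply _ s

theorem ofTwoVars_X (b : Fin 2) : ofTwoVars (X b) = ofTwoVarsFamily b :=
  substAlgHom_X _ b

theorem constantCoeff_ofTwoVars (s : A2) : constantCoeff (ofTwoVars s) = constantCoeff s := by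
  rw [ofTwoVars_apply,
    constantCoeff_subst_of_constantCoeff_eq_zero constantCoeff_ofTwoVarsFamily]

theorem toTwoVars_ofTwoVars (hN0 : N 0 = 3)
    (hN : ∀ i ∈ ({1, 2, 3} : Finset (Fin 5)), 3 ≤ N i) (s : A2) :
    toTwoVars N (ofTwoVars s) = s := by
  have hπ := hasSubst_toTwoVarsFamily hN0 hN
  rw [toTwoVars_eq_subst hN0 hN, ofTwoVars_apply,
    subst_comp_subst_apply hasSubst_ofTwoVarsFamily hπ]
  have hfamily : (fun b => subst (toTwoVarsFamily N) (ofTwoVarsFamily b)) = X := by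
    funext b
    fin_cases b
    · simp [ofTwoVarsFamily, subst_X hπ, toTwoVarsFamily_zero hN0]
    · simp [ofTwoVarsFamily, subst_X hπ, toTwoVarsFamily_four]
  rw [hfamily, subst_self, id]

theorem X_sub_X_zero_pow_mem_idealI {i : Fin 5} (hi : i ∈ ({1, 2, 3} : Finset (Fin 5))) :
    X i - X 0 ^ (N i - 2) ∈ idealI N :=
  Ideal.subset_span ⟨i, by simpa using hi, rfl⟩

variable (N) in
def shear (c : ℂ) : Fin 5 → A5 := fun j =>
  if j ∈ ({1, 2, 3} : Finset (Fin 5)) then X j - c • X 0 ^ (N j - 2) else X j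

theorem shear_of_mem {c : ℂ} {j : Fin 5} (hj : j ∈ ({1, 2, 3} : Finset (Fin 5))) :
    shear N c j = X j - c • X 0 ^ (N j - 2) := if_pos hj

theorem shear_of_notMem {c : ℂ} {j : Fin 5} (hj : j ∉ ({1, 2, 3} : Finset (Fin 5))) :
    shear N c j = X j := if_neg hj

theorem shear_zero : shear N 0 = X := by
  funext j
  simp [shear]

theorem constantCoeff_shear (hN : ∀ i ∈ ({1, 2, 3} : Finset (Fin 5)), 3 ≤ N i) (c : ℂ)
    (j : Fin 5) : constantCoeff (shear N c j) = 0 := by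
  by_cases hj : j ∈ ({1, 2, 3} : Finset (Fin 5))
  · have : N j - 2 ≠ 0 := by have := hN j hj; omega
    simp [shear_of_mem hj, this]
  · simp [shear_of_notMem hj]

theorem hasSubst_shear (hN : ∀ i ∈ ({1, 2, 3} : Finset (Fin 5)), 3 ≤ N i) (c : ℂ) :
    HasSubst (shear N c) :=
  hasSubst_of_constantCoeff_zero (constantCoeff_shear hN c)

theorem subst_shear_shear (hN : ∀ i ∈ ({1, 2, 3} : Finset (Fin 5)), 3 ≤ N i) (c d : ℂ) :
    (fun j => subst (shear N d) (shear N c j)) = shear N (c + d) := by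
  have hd := hasSubst_shear hN d
  have hd0 : shear N d 0 = X 0 := shear_of_notMem (by decide)
  funext j
  by_cases hj : j ∈ ({1, 2, 3} : Finset (Fin 5))
  · rw [shear_of_mem hj, subst_sub hd, subst_smul hd, subst_pow hd, subst_X hd, subst_X hd, hd0,
      shear_of_mem hj, shear_of_mem hj, add_smul]
    abel
  · rw [shear_of_notMem hj, subst_X hd, shear_of_notMem hj, shear_of_notMem hj]

/-- Rescaling by these weights sets `λ₂, λ₃, λ₄` to zero; in the coordinates given by `shear`
this is the retraction `ofTwoVars ∘ toTwoVars` onto `ℂ[[g, λ₅]]`. -/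
def retractWeights : Fin 5 → ℂ := fun i => if i ∈ ({1, 2, 3} : Finset (Fin 5)) then 0 else 1

theorem ofTwoVars_toTwoVars_shear (hN0 : N 0 = 3)
    (hN : ∀ i ∈ ({1, 2, 3} : Finset (Fin 5)), 3 ≤ N i) :
    (fun j => ofTwoVars (toTwoVars N (shear N 1 j))) = retractWeights • (X : Fin 5 → A5) := by
  funext j
  rw [Pi.smul_apply']
  by_cases hj : j ∈ ({1, 2, 3} : Finset (Fin 5))
  · have hj4 : j ≠ 4 := by rintro rfl; simp at hj
    have hπ := hasSubst_toTwoVarsFamily hN0 hN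
    rw [shear_of_mem hj, toTwoVars_eq_subst hN0 hN, subst_sub hπ, subst_smul hπ, subst_pow hπ,
      subst_X hπ, subst_X hπ, toTwoVarsFamily_zero hN0, toTwoVarsFamily_of_ne_four hj4, one_smul,
      sub_self, map_zero, retractWeights, if_pos hj, zero_smul]
  · rw [shear_of_notMem hj, toTwoVars_X hN0 hN, retractWeights, if_neg hj, one_smul]
    obtain rfl | rfl : j = 0 ∨ j = 4 := by fin_cases j <;> simp_all
    · rw [toTwoVarsFamily_zero hN0, ofTwoVars_X]
      rfl
    · rw [toTwoVarsFamily_four, ofTwoVars_X]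
      rfl

theorem subst_shear_retractWeights_smul_X (hN : ∀ i ∈ ({1, 2, 3} : Finset (Fin 5)), 3 ≤ N i) :
    (fun j => subst (shear N 1) ((retractWeights • (X : Fin 5 → A5)) j)) =
      retractWeights • X := by
  have hφ := hasSubst_shear hN 1
  funext j
  simp only [Pi.smul_apply', subst_smul hφ, subst_X hφ, retractWeights]
  by_cases hj : j ∈ ({1, 2, 3} : Finset (Fin 5))
  · simp only [if_pos hj, zero_smul]
  · rw [if_neg hj, shear_of_notMem hj]

theorem sub_ofTwoVars_toTwoVars_mem (hN0 : N 0 = 3)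
    (hN : ∀ i ∈ ({1, 2, 3} : Finset (Fin 5)), 3 ≤ N i) (x : A5) :
    x - ofTwoVars (toTwoVars N x) ∈ idealI N := by
  have hπ := hasSubst_toTwoVarsFamily hN0 hN
  have hφ := hasSubst_shear hN 1
  set t := subst (shear N (-1)) x
  have hx : subst (shear N 1) t = x := by
    rw [subst_comp_subst_apply (hasSubst_shear hN (-1)) hφ, subst_shear_shear hN, neg_add_cancel,
      shear_zero, subst_self, id]
  have hretract : ofTwoVars (toTwoVars N x) = subst (shear N 1) (rescale retractWeights t) := by
    rw [← hx, toTwoVars_eq_subst hN0 hN, ofTwoVars_apply, subst_comp_subst_apply hφ hπ,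
      subst_comp_subst_apply (hφ.comp_subst hπ) hasSubst_ofTwoVarsFamily, rescale_eq_subst,
      subst_comp_subst_apply (HasSubst.smul_X _) hφ, subst_shear_retractWeights_smul_X hN,
      ← ofTwoVars_toTwoVars_shear hN0 hN]
    simp only [ofTwoVars_apply, toTwoVars_eq_subst hN0 hN]
  have hgen : ∀ y ∈ (X '' ((({1, 2, 3} : Finset (Fin 5))) : Set (Fin 5)) : Set A5),
      subst (shear N 1) y ∈ idealI N := by
    rintro _ ⟨i, hi, rfl⟩
    rw [subst_X hφ, shear_of_mem hi, one_smul]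
    exact X_sub_X_zero_pow_mem_idealI hi
  rw [hretract, ← hx, ← subst_sub hφ]
  exact subst_mem_of_mem_span hφ hgen (sub_rescale_mem_span_X _ t)

theorem toTwoVars_eq_zero_iff (hN0 : N 0 = 3)
    (hN : ∀ i ∈ ({1, 2, 3} : Finset (Fin 5)), 3 ≤ N i) {x : A5} :
    toTwoVars N x = 0 ↔ x ∈ idealI N :=
  ⟨fun h => by simpa [h] using sub_ofTwoVars_toTwoVars_mem hN0 hN x,
    toTwoVars_eq_zero_of_mem hN0 hN⟩

theorem isDiffI_iff {f : Fin 5 → A5} :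
    IsDiffI N f ↔
      IsDiff5 f ∧ ∀ i ∈ ({1, 2, 3} : Finset (Fin 5)), f i - f 0 ^ (N i - 2) ∈ idealI N := by
  refine and_congr_right fun hf => ?_
  have hs : HasSubst f := IsDiff.hasSubst (f := f) hf
  constructor
  · intro hI i hi
    simpa [subst5_eq_subst hs, subst_sub hs, subst_pow hs, subst_X hs] using
      hI _ (X_sub_X_zero_pow_mem_idealI hi)
  · intro hgen x hx
    rw [subst5_eq_subst hs]
    refine subst_mem_of_mem_span hs ?_ hx
    rintro _ ⟨i, hi, rfl⟩
    rw [subst_sub hs, subst_pow hs, subst_X hs, subst_X hs]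
    exact hgen i (by simpa using hi)

theorem isDiffI_compDiff5 {f g : Fin 5 → A5} (hf : IsDiffI N f) (hg : IsDiffI N g) :
    IsDiffI N (compDiff5 f g) := by
  have hfs : HasSubst f := IsDiff.hasSubst (f := f) hf.1
  have hgs : HasSubst g := IsDiff.hasSubst (f := g) hg.1
  rw [compDiff5_eq hgs]
  refine ⟨IsDiff.comp (f := f) (g := g) hf.1 hg.1, fun x hx => ?_⟩
  rw [subst5_eq_subst (hfs.comp_subst hgs), ← subst_comp_subst_apply hfs hgs,
    ← subst5_eq_subst hgs, ← subst5_eq_subst hfs]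
  exact hg.2 _ (hf.2 x hx)

theorem projDiff_zero (f : Fin 5 → A5) : projDiff N f 0 = toTwoVars N (f 0) := rfl

theorem projDiff_one (f : Fin 5 → A5) : projDiff N f 1 = toTwoVars N (f 4) := rfl

theorem isDiff2_projDiff (hN0 : N 0 = 3) (hN : ∀ i ∈ ({1, 2, 3} : Finset (Fin 5)), 3 ≤ N i)
    {f : Fin 5 → A5} (hf : IsDiff5 f) : IsDiff2 (projDiff N f) := by
  have key (j : Fin 5) (b : Fin 2) (hjb : toTwoVarsFamily N j = X b) :
      ∃ u : A2, constantCoeff u = 1 ∧ toTwoVars N (f j) = X b * u := by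
    obtain ⟨u, hu, hfj⟩ := hf j
    exact ⟨toTwoVars N u, by rw [constantCoeff_toTwoVars hN0 hN, hu],
      by rw [hfj, toTwoVars_X_mul hN0 hN, hjb]⟩
  intro b
  fin_cases b
  · exact key 0 0 (toTwoVarsFamily_zero hN0)
  · exact key 4 1 toTwoVarsFamily_four

theorem toTwoVars_subst (hN0 : N 0 = 3) (hN : ∀ i ∈ ({1, 2, 3} : Finset (Fin 5)), 3 ≤ N i)
    {f : Fin 5 → A5} (hf : IsDiffI N f) (x : A5) :
    toTwoVars N (subst f x) = subst (projDiff N f) (toTwoVars N x) := by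
  have hπ := hasSubst_toTwoVarsFamily hN0 hN
  have hfs : HasSubst f := IsDiff.hasSubst (f := f) hf.1
  have hps : HasSubst (projDiff N f) := IsDiff.hasSubst (isDiff2_projDiff hN0 hN hf.1)
  have hfamily (j : Fin 5) :
      toTwoVars N (f j) = subst (projDiff N f) (toTwoVarsFamily N j) := by
    by_cases hj4 : j = 4
    · rw [hj4, toTwoVarsFamily_four, subst_X hps, projDiff_one]
    rw [toTwoVarsFamily_of_ne_four hj4, subst_pow hps, subst_X hps, projDiff_zero]
    by_cases hj0 : j = 0
    · rw [hj0, hN0, pow_one]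
    have hj : j ∈ ({1, 2, 3} : Finset (Fin 5)) := by fin_cases j <;> simp_all
    have hdiff := toTwoVars_eq_zero_of_mem hN0 hN ((isDiffI_iff.1 hf).2 j hj)
    rw [toTwoVars_eq_subst hN0 hN, subst_sub hπ, subst_pow hπ, sub_eq_zero] at hdiff
    rw [toTwoVars_eq_subst hN0 hN, toTwoVars_eq_subst hN0 hN, hdiff]
  rw [toTwoVars_eq_subst hN0 hN, toTwoVars_eq_subst hN0 hN, subst_comp_subst_apply hfs hπ,
    subst_comp_subst_apply hπ hps]
  simp only [← toTwoVars_eq_subst hN0 hN, hfamily]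

theorem projDiff_compDiff5 (hN0 : N 0 = 3) (hN : ∀ i ∈ ({1, 2, 3} : Finset (Fin 5)), 3 ≤ N i)
    {f g : Fin 5 → A5} (hg : IsDiffI N g) :
    projDiff N (compDiff5 f g) = compDiff2 (projDiff N f) (projDiff N g) := by
  rw [compDiff5_eq (IsDiff.hasSubst (f := g) hg.1),
    compDiff2_eq (IsDiff.hasSubst (isDiff2_projDiff hN0 hN hg.1))]
  funext b
  fin_cases b <;> exact toTwoVars_subst hN0 hN hg _

theorem toTwoVarsFamily_mem_nonZeroDivisors (j : Fin 5) :
    toTwoVarsFamily N j ∈ nonZeroDivisors A2 := by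
  by_cases hj4 : j = 4
  · rw [hj4, toTwoVarsFamily_four]
    exact X_mem_nonzeroDivisors
  · rw [toTwoVarsFamily_of_ne_four hj4]
    exact pow_mem X_mem_nonzeroDivisors _

theorem projDiff_eq_X_iff (hN0 : N 0 = 3) (hN : ∀ i ∈ ({1, 2, 3} : Finset (Fin 5)), 3 ≤ N i)
    {f : Fin 5 → A5} (hf : IsDiffI N f) :
    projDiff N f = X ↔ ∀ j, ∃ B ∈ idealI N, f j = X j * (1 + B) := by
  have hfs : HasSubst f := IsDiff.hasSubst (f := f) hf.1
  constructor
  · intro hproj j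
    obtain ⟨u, -, hfj⟩ := hf.1 j
    have hfix : toTwoVarsFamily N j * toTwoVars N u = toTwoVarsFamily N j * 1 := by
      rw [← toTwoVars_X_mul hN0 hN, ← hfj, mul_one, ← toTwoVars_X hN0 hN, ← subst_X (R := ℂ) hfs j,
        toTwoVars_subst hN0 hN hf, hproj, subst_self (R := ℂ), id]
    have hu : toTwoVars N u = 1 :=
      (mul_cancel_left_mem_nonZeroDivisors (toTwoVarsFamily_mem_nonZeroDivisors j)).1 hfix
    refine ⟨u - 1, ?_, by rw [hfj, add_sub_cancel]⟩
    rw [← toTwoVars_eq_zero_iff hN0 hN]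
    simpa only [toTwoVars_eq_subst hN0 hN, ← coe_substAlgHom (hasSubst_toTwoVarsFamily hN0 hN),
      map_sub, map_one, sub_eq_zero] using hu
  · intro hB
    have hfix (j : Fin 5) : toTwoVars N (f j) = toTwoVarsFamily N j := by
      obtain ⟨B, hB, hfj⟩ := hB j
      have hB0 := toTwoVars_eq_zero_of_mem hN0 hN hB
      simp only [hfj, toTwoVars_eq_subst hN0 hN,
        ← coe_substAlgHom (hasSubst_toTwoVarsFamily hN0 hN), map_mul, map_add, map_one] at hB0 ⊢
      rw [hB0, add_zero, mul_one, substAlgHom_X]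
    funext b
    fin_cases b
    · exact (hfix 0).trans (toTwoVarsFamily_zero hN0)
    · exact hfix 4

variable (N) in
def liftDiff (F : Fin 2 → A2) : Fin 5 → A5 := fun j =>
  if j = 4 then X 4 * ofTwoVars (divX 1 (F 1)) else X j * ofTwoVars (divX 0 (F 0)) ^ (N j - 2)

theorem liftDiff_four {F : Fin 2 → A2} {v : A2} (hF : F 1 = X 1 * v) :
    liftDiff N F 4 = X 4 * ofTwoVars v := by
  rw [liftDiff, if_pos rfl, hF, divX_X_mul]

theorem liftDiff_of_ne_four {F : Fin 2 → A2} {v : A2} (hF : F 0 = X 0 * v) {j : Fin 5}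
    (hj : j ≠ 4) : liftDiff N F j = X j * ofTwoVars v ^ (N j - 2) := by
  rw [liftDiff, if_neg hj, hF, divX_X_mul]

theorem liftDiff_zero (hN0 : N 0 = 3) {F : Fin 2 → A2} {v : A2} (hF : F 0 = X 0 * v) :
    liftDiff N F 0 = X 0 * ofTwoVars v := by
  rw [liftDiff_of_ne_four hF (by decide), hN0, pow_one]

theorem hasSubst_liftDiff (F : Fin 2 → A2) : HasSubst (liftDiff N F) :=
  hasSubst_of_constantCoeff_zero fun j => by
    unfold liftDiff
    split_ifs <;> simp

theorem isDiffI_liftDiff (hN0 : N 0 = 3) {F : Fin 2 → A2} (hF : IsDiff2 F) :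
    IsDiffI N (liftDiff N F) := by
  obtain ⟨v₀, hv₀, hF₀⟩ := hF 0
  obtain ⟨v₁, hv₁, hF₁⟩ := hF 1
  refine isDiffI_iff.2 ⟨fun j => ?_, fun i hi => ?_⟩
  · by_cases hj : j = 4
    · subst hj
      exact ⟨ofTwoVars v₁, by rw [constantCoeff_ofTwoVars, hv₁], liftDiff_four hF₁⟩
    · exact ⟨ofTwoVars v₀ ^ (N j - 2), by rw [map_pow, constantCoeff_ofTwoVars, hv₀, one_pow],
        liftDiff_of_ne_four hF₀ hj⟩
  · have hi4 : i ≠ 4 := by rintro rfl; simp at hi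
    rw [liftDiff_of_ne_four hF₀ hi4, liftDiff_zero hN0 hF₀, mul_pow, ← sub_mul]
    exact Ideal.mul_mem_right _ _ (X_sub_X_zero_pow_mem_idealI hi)

theorem projDiff_liftDiff (hN0 : N 0 = 3) (hN : ∀ i ∈ ({1, 2, 3} : Finset (Fin 5)), 3 ≤ N i)
    {F : Fin 2 → A2} (hF : IsDiff2 F) : projDiff N (liftDiff N F) = F := by
  obtain ⟨v₀, -, hF₀⟩ := hF 0
  obtain ⟨v₁, -, hF₁⟩ := hF 1
  refine funext (Fin.forall_fin_two.2 ⟨?_, ?_⟩)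
  · rw [projDiff_zero, liftDiff_zero hN0 hF₀, toTwoVars_X_mul hN0 hN, toTwoVarsFamily_zero hN0,
      toTwoVars_ofTwoVars hN0 hN, ← hF₀]
  · rw [projDiff_one, liftDiff_four hF₁, toTwoVars_X_mul hN0 hN, toTwoVarsFamily_four,
      toTwoVars_ofTwoVars hN0 hN, ← hF₁]

theorem subst_liftDiff_ofTwoVars (hN0 : N 0 = 3) {G : Fin 2 → A2} (hG : IsDiff2 G) (s : A2) :
    subst (liftDiff N G) (ofTwoVars s) = ofTwoVars (subst G s) := by
  obtain ⟨w₀, -, hG₀⟩ := hG 0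
  obtain ⟨w₁, -, hG₁⟩ := hG 1
  have hfamily : (fun b => subst (liftDiff N G) (ofTwoVarsFamily b)) =
      fun b => ofTwoVars (G b) := by
    funext b
    fin_cases b
    · simp [ofTwoVarsFamily, subst_X (hasSubst_liftDiff G), liftDiff_zero hN0 hG₀, hG₀,
        ofTwoVars_X]
    · simp [ofTwoVarsFamily, subst_X (hasSubst_liftDiff G), liftDiff_four hG₁, hG₁, ofTwoVars_X]
  rw [ofTwoVars_apply, ofTwoVars_apply,
    subst_comp_subst_apply hasSubst_ofTwoVarsFamily (hasSubst_liftDiff G), hfamily,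
    subst_comp_subst_apply (IsDiff.hasSubst hG) hasSubst_ofTwoVarsFamily]
  simp only [ofTwoVars_apply]

theorem liftDiff_compDiff2 (hN0 : N 0 = 3) {F G : Fin 2 → A2} (hF : IsDiff2 F)
    (hG : IsDiff2 G) :
    liftDiff N (compDiff2 F G) = compDiff5 (liftDiff N F) (liftDiff N G) := by
  have hGs : HasSubst G := IsDiff.hasSubst hG
  have hLs := hasSubst_liftDiff (N := N) G
  obtain ⟨v₀, -, hF₀⟩ := hF 0
  obtain ⟨v₁, -, hF₁⟩ := hF 1
  obtain ⟨w₀, -, hG₀⟩ := hG 0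
  obtain ⟨w₁, -, hG₁⟩ := hG 1
  rw [compDiff2_eq hGs, compDiff5_eq hLs]
  funext j
  by_cases hj : j = 4
  · subst hj
    rw [liftDiff_four (by rw [hF₁, subst_X_mul_eq hGs hG₁]), liftDiff_four hF₁,
      subst_X_mul_eq hLs (liftDiff_four hG₁), subst_liftDiff_ofTwoVars hN0 hG, map_mul]
  · rw [liftDiff_of_ne_four (by rw [hF₀, subst_X_mul_eq hGs hG₀]) hj, liftDiff_of_ne_four hF₀ hj,
      subst_X_mul_eq hLs (liftDiff_of_ne_four hG₀ hj), subst_pow hLs,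
      subst_liftDiff_ofTwoVars hN0 hG, map_mul, mul_pow]

end DiffI

open DiffI

/-- there is a short exact sequence
`1 → (1+I)⁵ → Diff(ℂ⁵,0)^I → Diff(ℂ²,0) → 1`, where the kernel consists of the
diffeomorphisms `f(λ_j) = λ_j(1 + B_j)` with `B_j ∈ I`, the surjection is induced by
the quotient `ℂ[[λ₁,…,λ₅]]/I ≅ ℂ[[g,λ₅]]`, and the sequence splits. -/
theorem diffI_short_exact_sequence
    (N : Fin 5 → ℕ) (hN0 : N 0 = 3) (hN1 : N 1 = 3) (hN2 : N 2 = 3) (hN3 : N 3 = 4) :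
    -- `Diff(ℂ⁵,0)^I` maps into `Diff(ℂ²,0)`, multiplicatively
    (∀ f, IsDiffI N f → IsDiff2 (projDiff N f)) ∧
    (∀ f g, IsDiffI N f → IsDiffI N g →
      IsDiffI N (compDiff5 f g) ∧
      projDiff N (compDiff5 f g) = compDiff2 (projDiff N f) (projDiff N g)) ∧
    -- the kernel is `(1+I)⁵`
    (∀ f, IsDiffI N f →
      ((projDiff N f = fun b => MvPowerSeries.X b) ↔
        ∀ j, ∃ B ∈ idealI N, f j = MvPowerSeries.X j * (1 + B))) ∧
    -- surjectivity, with a multiplicative (group-homomorphism) splitting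
    (∃ sec : (Fin 2 → A2) → (Fin 5 → A5),
      (∀ F, IsDiff2 F → IsDiffI N (sec F) ∧ projDiff N (sec F) = F) ∧
      (∀ F G, IsDiff2 F → IsDiff2 G →
        sec (compDiff2 F G) = compDiff5 (sec F) (sec G))) := by
  have hN : ∀ i ∈ ({1, 2, 3} : Finset (Fin 5)), 3 ≤ N i := by
    simp [hN1, hN2, hN3]
  refine ⟨fun f hf => isDiff2_projDiff hN0 hN hf.1,
    fun f g hf hg => ⟨isDiffI_compDiff5 hf hg, projDiff_compDiff5 hN0 hN hg⟩,
    fun f hf => projDiff_eq_X_iff hN0 hN hf,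
    liftDiff N, fun F hF => ⟨isDiffI_liftDiff hN0 hF, projDiff_liftDiff hN0 hN hF⟩,
    fun F G hF hG => liftDiff_compDiff2 hN0 hF hG⟩
end
end

section
/- Let H be a connected graded commutative Hopf algebra over ℂ, J ⊆ H a Hopf ideal, and K a commutative ℂ-algebra with a Rota–Baxter splitting K = K_- ⊕ K_+ as in the Birkhoff decomposition. If γ : H → K is a character with γ(J) = 0, then both components γ_- and γ_+ of its Birkhoff decomposition also vanish on J. In particular, γ factors through H/J and its Birkhoff decomposition in the character group of H/J pulls back to that of H. -/
/-!
Let `Fₙ` be the span of the homogeneous components of degree `≤ n`. By induction on `n`, `γ₋`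
vanishes on `J ∩ Fₙ`. From `γ = (γ₋ ∘ S) ⋆ γ₊` and `γ₋ ⋆ (γ₋ ∘ S) = ε` one gets `γ₊ = γ₋ ⋆ γ`.
For `x ∈ J ∩ Fₙ₊₁`, connectedness puts the reduced coproduct `Δx - x ⊗ 1 - 1 ⊗ x` in `Fₙ ⊗ Fₙ`,
and the Hopf ideal condition puts it in `J ⊗ H + H ⊗ J`; over a field these two subspaces meet
in `(J ∩ Fₙ) ⊗ Fₙ + Fₙ ⊗ (J ∩ Fₙ)`, which `γ₋ ⊗ γ` kills. Hence `γ₊ x = γ₋ x`, an element of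
`K₋ ∩ K₊ = 0`.
-/

open TensorProduct

section TensorRange

variable {R M N P Q M' N' : Type*} [CommSemiring R] [AddCommMonoid M] [AddCommMonoid N]
  [AddCommMonoid P] [AddCommMonoid Q] [AddCommMonoid M'] [AddCommMonoid N'] [Module R M]
  [Module R N] [Module R P] [Module R Q] [Module R M'] [Module R N']

theorem TensorProduct.map_mem_range_map_subtype {f : M →ₗ[R] P} {g : N →ₗ[R] Q}
    {A : Submodule R M} {B : Submodule R N} {A' : Submodule R P} {B' : Submodule R Q}
    (hf : ∀ x ∈ A, f x ∈ A') (hg : ∀ x ∈ B, g x ∈ B') {z : M ⊗[R] N}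
    (hz : z ∈ LinearMap.range (map A.subtype B.subtype)) :
    map f g z ∈ LinearMap.range (map A'.subtype B'.subtype) := by
  obtain ⟨w, rfl⟩ := hz
  refine ⟨map (f.restrict hf) (g.restrict hg) w, ?_⟩
  rw [map_map, map_map, LinearMap.subtype_comp_restrict, LinearMap.subtype_comp_restrict]
  rfl

theorem TensorProduct.range_map_subtype_mono {A A' : Submodule R M} {B B' : Submodule R N}
    (hA : A ≤ A') (hB : B ≤ B') :
    LinearMap.range (map A.subtype B.subtype) ≤ LinearMap.range (map A'.subtype B'.subtype) :=
  fun z hz => by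
    simpa using map_mem_range_map_subtype (f := LinearMap.id) (g := LinearMap.id) hA hB hz

theorem TensorProduct.range_map_le_ker_map_left {f' : M' →ₗ[R] M} (g' : N' →ₗ[R] N)
    {f : M →ₗ[R] P} (g : N →ₗ[R] Q) (h : LinearMap.range f' ≤ LinearMap.ker f) :
    LinearMap.range (map f' g') ≤ LinearMap.ker (map f g) :=
  LinearMap.range_le_ker_iff.mpr <| by
    rw [← map_comp, LinearMap.range_le_ker_iff.mp h, map_zero_left]

theorem TensorProduct.range_map_le_ker_map_right (f' : M' →ₗ[R] M) {g' : N' →ₗ[R] N}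
    (f : M →ₗ[R] P) {g : N →ₗ[R] Q} (h : LinearMap.range g' ≤ LinearMap.ker g) :
    LinearMap.range (map f' g') ≤ LinearMap.ker (map f g) :=
  LinearMap.range_le_ker_iff.mpr <| by
    rw [← map_comp, LinearMap.range_le_ker_iff.mp h, map_zero_right]

end TensorRange

section VectorSpace

variable {k V : Type*} [Field k] [AddCommGroup V] [Module k V]

theorem Submodule.exists_projection_along_mapsTo (U F : Submodule k V) :
    ∃ p : V →ₗ[k] V, U ≤ LinearMap.ker p ∧ (∀ x, x - p x ∈ U) ∧ ∀ x ∈ F, p x ∈ F := by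
  obtain ⟨C, hdisj, hsup⟩ :=
    IsModularLattice.exists_disjoint_and_sup_eq (inf_le_right : U ⊓ F ≤ F)
  have hCF : C ≤ F := hsup ▸ le_sup_right
  have hCU : Disjoint C U := by
    rw [disjoint_iff_inf_le]
    exact hdisj.symm.le_bot.trans'
      (le_inf inf_le_left (le_inf inf_le_right (inf_le_left.trans hCF)))
  obtain ⟨W, hCW, hWU⟩ := hCU.exists_isCompl
  refine ⟨W.projection U hWU, (ker_projection hWU).ge, sub_projection_mem hWU, ?_⟩
  suffices h : F ≤ F.comap (W.projection U hWU) from fun x hx => h hx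
  rw [← hsup]
  refine sup_le (inf_le_left.trans ((ker_projection hWU).ge.trans fun x hx => ?_)) fun c hc => ?_
  · simp [LinearMap.mem_ker.mp hx]
  · rw [Submodule.mem_comap, projection_apply_of_mem_left hWU (hCW hc)]
    exact le_sup_right (a := U ⊓ F) hc

theorem TensorProduct.range_map_subtype_sup_inf_le (U F : Submodule k V) :
    (LinearMap.range (map U.subtype LinearMap.id) ⊔
      LinearMap.range (map LinearMap.id U.subtype)) ⊓ LinearMap.range (map F.subtype F.subtype) ≤
      LinearMap.range (map (U ⊓ F).subtype F.subtype) ⊔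
        LinearMap.range (map F.subtype (U ⊓ F).subtype) := by
  rintro z ⟨hzU, hzF⟩
  obtain ⟨p, hpU, hsub, hpF⟩ := U.exists_projection_along_mapsTo F
  have hUp : LinearMap.range U.subtype ≤ LinearMap.ker p := by rwa [Submodule.range_subtype]
  have hpp : map p p z = 0 :=
    sup_le (range_map_le_ker_map_left _ p hUp) (range_map_le_ker_map_right _ p hUp) hzU
  have hsubF : ∀ x ∈ F, (LinearMap.id - p : V →ₗ[k] V) x ∈ U ⊓ F :=
    fun x hx => ⟨hsub x, sub_mem hx (hpF x hx)⟩
  have hz : z = map (LinearMap.id - p) LinearMap.id z + map p (LinearMap.id - p) z +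
      map p p z := by
    rw [add_assoc, ← LinearMap.add_apply, ← map_add_right, sub_add_cancel, ← LinearMap.add_apply,
      ← map_add_left, sub_add_cancel, map_id, LinearMap.id_apply]
  rw [hz, hpp, add_zero]
  exact Submodule.add_mem_sup (map_mem_range_map_subtype hsubF (fun _ h => h) hzF)
    (map_mem_range_map_subtype hpF hsubF hzF)

end VectorSpace

section Convolution

open Coalgebra HopfAlgebra WithConv

variable {R H K : Type*} [CommSemiring R] [Semiring H] [HopfAlgebra R H] [CommSemiring K]
  [Algebra R K]

theorem AlgHom.convMul_comp_antipode_eq_one (φ : H →ₐ[R] K) :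
    toConv φ.toLinearMap * toConv (φ.toLinearMap ∘ₗ antipode R) = 1 := by
  have h := LinearMap.algHom_comp_convMul_distrib φ (toConv LinearMap.id) (toConv (antipode R))
  rw [LinearMap.id_mul_antipode] at h
  ext x
  simpa using congr($h x).symm

theorem AlgHom.eq_convMul_of_eq_comp_antipode_convMul {γ γm γp : H →ₐ[R] K}
    (h : ∀ x, γ x = LinearMap.mul' R K
      (map (γm.toLinearMap ∘ₗ antipode R) γp.toLinearMap (comul x)))
    (x : H) : γp x = LinearMap.mul' R K (map γm.toLinearMap γ.toLinearMap (comul x)) := by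
  have hγ : toConv γ.toLinearMap =
      toConv (γm.toLinearMap ∘ₗ antipode R) * toConv γp.toLinearMap := by
    ext y
    exact h y
  have hγp : toConv γp.toLinearMap = toConv γm.toLinearMap * toConv γ.toLinearMap := by
    rw [hγ, ← mul_assoc, γm.convMul_comp_antipode_eq_one, one_mul]
  exact congr($hγp x)

end Convolution

section Filtration

variable {R M : Type*} [Semiring R] [AddCommMonoid M] [Module R M] (ℬ : ℕ → Submodule R M)

def gradedFiltration (n : ℕ) : Submodule R M := ⨆ i ≤ n, ℬ i

theorem le_gradedFiltration {i n : ℕ} (h : i ≤ n) : ℬ i ≤ gradedFiltration ℬ n :=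
  le_iSup₂_of_le i h le_rfl

theorem gradedFiltration_zero : gradedFiltration ℬ 0 = ℬ 0 :=
  le_antisymm (iSup₂_le fun i hi => by rw [Nat.le_zero.mp hi]) (le_gradedFiltration ℬ le_rfl)

theorem gradedFiltration_mono : Monotone (gradedFiltration ℬ) := fun _ _ h =>
  iSup₂_le fun _ hi => le_gradedFiltration ℬ (hi.trans h)

theorem exists_mem_gradedFiltration (hℬ : iSup ℬ = ⊤) (x : M) :
    ∃ n, x ∈ gradedFiltration ℬ n := by
  have hx : x ∈ ⨆ n, gradedFiltration ℬ n :=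
    eq_top_mono (iSup_mono fun _ => le_gradedFiltration ℬ le_rfl) hℬ ▸ Submodule.mem_top
  exact (Submodule.mem_iSup_of_directed _ (gradedFiltration_mono ℬ).directed_le).mp hx

end Filtration

theorem DirectSum.sum_eq_of_sum_mem {ι κ M σ : Type*} [DecidableEq ι] [AddCommMonoid M]
    [SetLike σ M] [AddSubmonoidClass σ M] (ℳ : ι → σ) [DirectSum.Decomposition ℳ]
    {s : Finset κ} {d : κ → ι} {z : κ → M} (hz : ∀ j ∈ s, z j ∈ ℳ (d j)) {j₀ : κ}
    (hj₀ : j₀ ∈ s) (huniq : ∀ j ∈ s, d j = d j₀ → j = j₀) (hsum : ∑ j ∈ s, z j ∈ ℳ (d j₀)) :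
    ∑ j ∈ s, z j = z j₀ := by
  rw [← DirectSum.decompose_of_mem_same ℳ hsum, DirectSum.decompose_sum,
    DFinsupp.finsetSum_apply, AddSubmonoidClass.coe_finsetSum,
    Finset.sum_eq_single_of_mem j₀ hj₀ fun j hj hne =>
      DirectSum.decompose_of_mem_ne ℳ (hz j hj) fun h => hne (huniq j hj h),
    DirectSum.decompose_of_mem_same ℳ (hz j₀ hj₀)]

section CounitContraction

variable {k H : Type*} [Field k] [CommRing H] [Bialgebra k H]

open Coalgebra

theorem rid_lTensor_counit_mem_s9 {A B : Submodule k H} {z : H ⊗[k] H}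
    (hz : z ∈ LinearMap.range (map A.subtype B.subtype)) :
    TensorProduct.rid k H (LinearMap.lTensor H counit z) ∈ A := by
  obtain ⟨w, rfl⟩ := hz
  induction w using TensorProduct.induction_on with
  | zero => simp
  | tmul a b => simpa using A.smul_mem _ a.2
  | add u v hu hv => simpa using add_mem hu hv

theorem lid_rTensor_counit_mem_s9 {A B : Submodule k H} {z : H ⊗[k] H}
    (hz : z ∈ LinearMap.range (map A.subtype B.subtype)) :
    TensorProduct.lid k H (LinearMap.rTensor H counit z) ∈ B := by
  obtain ⟨w, rfl⟩ := hz
  induction w using TensorProduct.induction_on with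
  | zero => simp
  | tmul a b => simpa using B.smul_mem _ b.2
  | add u v hu hv => simpa using add_mem hu hv

theorem eq_rid_lTensor_counit_tmul_one {A B : Submodule k H} (hB : B ≤ 1) {z : H ⊗[k] H}
    (hz : z ∈ LinearMap.range (map A.subtype B.subtype)) :
    z = TensorProduct.rid k H (LinearMap.lTensor H counit z) ⊗ₜ 1 := by
  obtain ⟨w, rfl⟩ := hz
  induction w using TensorProduct.induction_on with
  | zero => simp
  | tmul a b =>
    obtain ⟨c, hc⟩ := Submodule.mem_one.mp (hB b.2)
    simp [← hc, Algebra.algebraMap_eq_smul_one, TensorProduct.smul_tmul']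
  | add u v hu hv =>
    conv_lhs => rw [map_add, hu, hv]
    simp only [map_add, TensorProduct.add_tmul]

theorem eq_one_tmul_lid_rTensor_counit {A B : Submodule k H} (hA : A ≤ 1) {z : H ⊗[k] H}
    (hz : z ∈ LinearMap.range (map A.subtype B.subtype)) :
    z = 1 ⊗ₜ TensorProduct.lid k H (LinearMap.rTensor H counit z) := by
  obtain ⟨w, rfl⟩ := hz
  induction w using TensorProduct.induction_on with
  | zero => simp
  | tmul a b =>
    obtain ⟨c, hc⟩ := Submodule.mem_one.mp (hA a.2)
    simp [← hc, Algebra.algebraMap_eq_smul_one, TensorProduct.smul_tmul']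
  | add u v hu hv =>
    conv_lhs => rw [map_add, hu, hv]
    simp only [map_add, TensorProduct.tmul_add]

end CounitContraction

section ConnectedGraded

open Coalgebra Finset.HasAntidiagonal

variable {k H : Type*} [Field k] [CommRing H] [Bialgebra k H] {ℬ : ℕ → Submodule k H}
  [DirectSum.Decomposition ℬ]

theorem comul_component_left_eq (hconn : ℬ 0 = 1) {i : ℕ} {y : H} (hy : y ∈ ℬ i)
    (μ : (p : ℕ × ℕ) → LinearMap.range (map (ℬ p.1).subtype (ℬ p.2).subtype))
    (hμ : ∑ p ∈ antidiagonal i, (μ p : H ⊗[k] H) = comul y) :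
    (μ (i, 0) : H ⊗[k] H) = y ⊗ₜ 1 := by
  have hsum : ∑ p ∈ antidiagonal i,
      TensorProduct.rid k H (LinearMap.lTensor H counit (μ p : H ⊗[k] H)) = y := by
    rw [← map_sum, ← map_sum, hμ, lTensor_counit_comul, TensorProduct.rid_tmul, one_smul]
  -- `(id ⊗ ε) μₚ` is homogeneous of degree `p.1`, so only `p = (i, 0)` contributes in degree `i`.
  have hcomp := DirectSum.sum_eq_of_sum_mem ℬ (d := Prod.fst)
    (fun p _ => rid_lTensor_counit_mem_s9 (μ p).2) (j₀ := (i, 0)) (by simp)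
    (fun p hp h => Prod.ext h (by simp only [mem_antidiagonal] at hp; omega)) (hsum ▸ hy)
  rw [eq_rid_lTensor_counit_tmul_one hconn.le (μ (i, 0)).2, ← hcomp, hsum]

theorem comul_component_right_eq (hconn : ℬ 0 = 1) {i : ℕ} {y : H} (hy : y ∈ ℬ i)
    (μ : (p : ℕ × ℕ) → LinearMap.range (map (ℬ p.1).subtype (ℬ p.2).subtype))
    (hμ : ∑ p ∈ antidiagonal i, (μ p : H ⊗[k] H) = comul y) :
    (μ (0, i) : H ⊗[k] H) = 1 ⊗ₜ y := by
  have hsum : ∑ p ∈ antidiagonal i,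
      TensorProduct.lid k H (LinearMap.rTensor H counit (μ p : H ⊗[k] H)) = y := by
    rw [← map_sum, ← map_sum, hμ, rTensor_counit_comul, TensorProduct.lid_tmul, one_smul]
  have hcomp := DirectSum.sum_eq_of_sum_mem ℬ (d := Prod.snd)
    (fun p _ => lid_rTensor_counit_mem_s9 (μ p).2) (j₀ := (0, i)) (by simp)
    (fun p hp h => Prod.ext (by simp only [mem_antidiagonal] at hp; dsimp only at h; omega) h)
    (hsum ▸ hy)
  rw [eq_one_tmul_lid_rTensor_counit hconn.le (μ (0, i)).2, ← hcomp, hsum]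

theorem comul_sub_mem_of_mem_homogeneous (hconn : ℬ 0 = 1)
    (hcomul : ∀ n : ℕ, ∀ x ∈ ℬ n, comul (R := k) x ∈
      ⨆ (p : ℕ × ℕ) (_ : p.1 + p.2 = n),
        LinearMap.range (map (ℬ p.1).subtype (ℬ p.2).subtype))
    {n i : ℕ} (hi : 0 < i) (hin : i ≤ n + 1) {y : H} (hy : y ∈ ℬ i) :
    comul y - y ⊗ₜ 1 - 1 ⊗ₜ y ∈ LinearMap.range
      (map (gradedFiltration ℬ n).subtype (gradedFiltration ℬ n).subtype) := by
  have hy' : comul (R := k) y ∈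
      ⨆ p ∈ antidiagonal i, LinearMap.range (map (ℬ p.1).subtype (ℬ p.2).subtype) := by
    simpa only [mem_antidiagonal] using hcomul i y hy
  obtain ⟨μ, hμ⟩ := (Submodule.mem_iSup_finset_iff_exists_sum _ _).mp hy'
  have hi0 : (i, 0) ∈ antidiagonal i := by simp
  have h0i : (0, i) ∈ (antidiagonal i).erase (i, 0) := by simp; omega
  rw [← hμ, ← Finset.add_sum_erase _ _ hi0, ← Finset.add_sum_erase _ _ h0i,
    comul_component_left_eq hconn hy μ hμ, comul_component_right_eq hconn hy μ hμ,
    add_sub_cancel_left, add_sub_cancel_left]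
  refine Submodule.sum_mem _ fun p hp => ?_
  simp only [Finset.mem_erase, mem_antidiagonal, ne_eq, Prod.ext_iff] at hp
  exact range_map_subtype_mono (le_gradedFiltration ℬ (by omega))
    (le_gradedFiltration ℬ (by omega)) (μ p).2

theorem comul_sub_mem_of_mem_gradedFiltration (hconn : ℬ 0 = 1)
    (hcomul : ∀ n : ℕ, ∀ x ∈ ℬ n, comul (R := k) x ∈
      ⨆ (p : ℕ × ℕ) (_ : p.1 + p.2 = n),
        LinearMap.range (map (ℬ p.1).subtype (ℬ p.2).subtype))
    {n : ℕ} {x : H} (hx : x ∈ gradedFiltration ℬ (n + 1)) :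
    comul x - x ⊗ₜ 1 - 1 ⊗ₜ x ∈ LinearMap.range
      (map (gradedFiltration ℬ n).subtype (gradedFiltration ℬ n).subtype) := by
  let Δ' : H →ₗ[k] H ⊗[k] H :=
    comul - (TensorProduct.mk k H H).flip 1 - TensorProduct.mk k H H 1
  suffices h : gradedFiltration ℬ (n + 1) ≤ (LinearMap.range
      (map (gradedFiltration ℬ n).subtype (gradedFiltration ℬ n).subtype)).comap Δ' from h hx
  refine iSup₂_le fun i hi y hy => ?_
  rcases Nat.eq_zero_or_pos i with rfl | hpos
  · obtain ⟨c, rfl⟩ := Submodule.mem_one.mp (hconn ▸ hy)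
    have h1 : (1 : H) ∈ gradedFiltration ℬ n :=
      le_gradedFiltration ℬ n.zero_le (hconn ▸ Submodule.mem_one.mpr ⟨1, map_one _⟩)
    rw [Submodule.mem_comap, Algebra.algebraMap_eq_smul_one, map_smul]
    refine Submodule.smul_mem _ _ ?_
    show comul (R := k) (1 : H) - (1 : H) ⊗ₜ[k] (1 : H) - (1 : H) ⊗ₜ[k] (1 : H) ∈ _
    rw [Bialgebra.comul_one, Algebra.TensorProduct.one_def, sub_self, zero_sub]
    exact neg_mem ⟨⟨1, h1⟩ ⊗ₜ ⟨1, h1⟩, rfl⟩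
  · exact comul_sub_mem_of_mem_homogeneous hconn hcomul hpos hi hy

end ConnectedGraded

section Birkhoff

open Coalgebra

variable {k H K : Type*} [Field k] [CommRing H] [Bialgebra k H] [CommRing K] [Algebra k K]

theorem mul'_map_comul_eq_of_reduced_comul_mem {U F : Submodule k H}
    (hU : ∀ x ∈ U, comul (R := k) x ∈ LinearMap.range (map U.subtype LinearMap.id) ⊔
      LinearMap.range (map LinearMap.id U.subtype))
    {φ ψ : H →ₐ[k] K} (hφ : ∀ y ∈ U ⊓ F, φ y = 0) (hψ : ∀ y ∈ U, ψ y = 0) {x : H} (hxU : x ∈ U)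
    (hxF : comul x - x ⊗ₜ 1 - 1 ⊗ₜ x ∈ LinearMap.range (map F.subtype F.subtype)) :
    LinearMap.mul' k K (map φ.toLinearMap ψ.toLinearMap (comul x)) = φ x := by
  have hxU' : comul x - x ⊗ₜ 1 - 1 ⊗ₜ x ∈ LinearMap.range (map U.subtype LinearMap.id) ⊔
      LinearMap.range (map LinearMap.id U.subtype) :=
    sub_mem (sub_mem (hU x hxU) (Submodule.mem_sup_left ⟨⟨x, hxU⟩ ⊗ₜ 1, rfl⟩))
      (Submodule.mem_sup_right ⟨1 ⊗ₜ ⟨x, hxU⟩, rfl⟩)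
  have hφ' : LinearMap.range (U ⊓ F).subtype ≤ LinearMap.ker φ.toLinearMap := by
    rw [Submodule.range_subtype]
    exact fun y hy => LinearMap.mem_ker.mpr (hφ y hy)
  have hψ' : LinearMap.range (U ⊓ F).subtype ≤ LinearMap.ker ψ.toLinearMap := by
    rw [Submodule.range_subtype]
    exact fun y hy => LinearMap.mem_ker.mpr (hψ y hy.1)
  have hker : map φ.toLinearMap ψ.toLinearMap (comul x - x ⊗ₜ 1 - 1 ⊗ₜ x) = 0 :=
    sup_le (range_map_le_ker_map_left _ _ hφ') (range_map_le_ker_map_right _ _ hψ')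
      (range_map_subtype_sup_inf_le U F ⟨hxU', hxF⟩)
  rw [map_sub, map_sub, sub_sub, sub_eq_zero] at hker
  simp [hker, hψ x hxU]

theorem birkhoff_factors_eq_zero_of_mem_gradedFiltration {ℬ : ℕ → Submodule k H}
    [DirectSum.Decomposition ℬ] (hconn : ℬ 0 = 1)
    (hcomul : ∀ n : ℕ, ∀ x ∈ ℬ n, comul (R := k) x ∈
      ⨆ (p : ℕ × ℕ) (_ : p.1 + p.2 = n),
        LinearMap.range (map (ℬ p.1).subtype (ℬ p.2).subtype))
    {U : Submodule k H}
    (hU : ∀ x ∈ U, comul (R := k) x ∈ LinearMap.range (map U.subtype LinearMap.id) ⊔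
      LinearMap.range (map LinearMap.id U.subtype))
    (hUε : ∀ x ∈ U, counit (R := k) x = 0)
    {Kneg Kpos : Submodule k K} (hdisj : Disjoint Kneg Kpos) {γ γm γp : H →ₐ[k] K}
    (hγU : ∀ x ∈ U, γ x = 0) (hγm : ∀ x, γm x - algebraMap k K (counit x) ∈ Kneg)
    (hγp : ∀ x, γp x ∈ Kpos)
    (hconv : ∀ x, γp x = LinearMap.mul' k K (map γm.toLinearMap γ.toLinearMap (comul x)))
    (n : ℕ) : ∀ x ∈ U, x ∈ gradedFiltration ℬ n → γm x = 0 ∧ γp x = 0 := by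
  induction n with
  | zero =>
    intro x hxU hx
    rw [gradedFiltration_zero, hconn] at hx
    obtain ⟨c, rfl⟩ := Submodule.mem_one.mp hx
    obtain rfl : c = 0 := by simpa using hUε _ hxU
    simp
  | succ n ih =>
    intro x hxU hx
    have hpm : γp x = γm x := by
      rw [hconv, mul'_map_comul_eq_of_reduced_comul_mem hU (fun y hy => (ih y hy.1 hy.2).1) hγU
        hxU (comul_sub_mem_of_mem_gradedFiltration hconn hcomul hx)]
    have hneg : γm x ∈ Kneg := by simpa [hUε x hxU] using hγm x
    have hm : γm x = 0 := Submodule.disjoint_def.mp hdisj _ hneg (hpm ▸ hγp x)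
    exact ⟨hm, hpm.trans hm⟩

end Birkhoff

theorem birkhoff_components_vanish_on_hopf_ideal_general
    (H : Type*) [CommRing H] [HopfAlgebra ℂ H]
    (ℬ : ℕ → Submodule ℂ H)
    (hinternal : DirectSum.IsInternal ℬ)
    (hconn : ℬ 0 = (1 : Submodule ℂ H))
    (hcomul : ∀ n : ℕ, ∀ x ∈ ℬ n,
      Coalgebra.comul (R := ℂ) x ∈
        ⨆ (p : ℕ × ℕ) (_ : p.1 + p.2 = n),
          LinearMap.range (TensorProduct.map (ℬ p.1).subtype (ℬ p.2).subtype))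
    (J : Ideal H)
    (hJcomul : ∀ x ∈ J, Coalgebra.comul (R := ℂ) x ∈
        LinearMap.range (TensorProduct.map (J.restrictScalars ℂ).subtype
          (LinearMap.id : H →ₗ[ℂ] H)) ⊔
        LinearMap.range (TensorProduct.map (LinearMap.id : H →ₗ[ℂ] H)
          (J.restrictScalars ℂ).subtype))
    (hJcounit : ∀ x ∈ J, Coalgebra.counit (R := ℂ) x = 0)
    (K : Type*) [CommRing K] [Algebra ℂ K]
    (Kneg Kpos : Submodule ℂ K)
    (hsplit : IsCompl Kneg Kpos)
    (γ : H →ₐ[ℂ] K)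
    (hγJ : ∀ x ∈ J, γ x = 0)
    (γm γp : H →ₐ[ℂ] K)
    (hγm : ∀ x : H, γm x - algebraMap ℂ K (Coalgebra.counit (R := ℂ) x) ∈ Kneg)
    (hγp : ∀ x : H, γp x ∈ Kpos)
    (hBirkhoff : ∀ x : H, γ x =
      LinearMap.mul' ℂ K
        (TensorProduct.map (γm.toLinearMap ∘ₗ HopfAlgebra.antipode (R := ℂ))
          γp.toLinearMap (Coalgebra.comul (R := ℂ) x))) :
    ∀ x ∈ J, γm x = 0 ∧ γp x = 0 := by
  let := hinternal.chooseDecomposition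
  intro x hx
  obtain ⟨n, hn⟩ := exists_mem_gradedFiltration ℬ hinternal.submodule_iSup_eq_top x
  have hconv := AlgHom.eq_convMul_of_eq_comp_antipode_convMul hBirkhoff
  exact birkhoff_factors_eq_zero_of_mem_gradedFiltration hconn hcomul (U := J.restrictScalars ℂ)
    hJcomul hJcounit hsplit.disjoint hγJ hγm hγp hconv n x hx hn

/-- Let `H` be a connected graded commutative Hopf algebra over ℂ, `J ⊆ H`
a Hopf ideal, and `K` a commutative ℂ-algebra with a splitting `K = K₋ ⊕ K₊` as in the
Birkhoff decomposition.  If a character `γ : H → K` vanishes on `J`, then both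
components `γ₋, γ₊` of its Birkhoff decomposition `γ = (γ₋ ∘ S) ⋆ γ₊` also vanish on
`J`; in particular `γ` factors through `H/J` and its Birkhoff decomposition pulls back
from that of `H/J`. -/
theorem birkhoff_components_vanish_on_hopf_ideal
    (H : Type*) [CommRing H] [HopfAlgebra ℂ H]
    (ℬ : ℕ → Submodule ℂ H)
    (hinternal : DirectSum.IsInternal ℬ)
    (hconn : ℬ 0 = (1 : Submodule ℂ H))
    (hmul : ∀ m n : ℕ, ∀ x ∈ ℬ m, ∀ y ∈ ℬ n, x * y ∈ ℬ (m + n))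
    (hcomul : ∀ n : ℕ, ∀ x ∈ ℬ n,
      Coalgebra.comul (R := ℂ) x ∈
        ⨆ (p : ℕ × ℕ) (_ : p.1 + p.2 = n),
          LinearMap.range (TensorProduct.map (ℬ p.1).subtype (ℬ p.2).subtype))
    (J : Ideal H)
    (hJcomul : ∀ x ∈ J, Coalgebra.comul (R := ℂ) x ∈
        LinearMap.range (TensorProduct.map (J.restrictScalars ℂ).subtype
          (LinearMap.id : H →ₗ[ℂ] H)) ⊔
        LinearMap.range (TensorProduct.map (LinearMap.id : H →ₗ[ℂ] H)
          (J.restrictScalars ℂ).subtype))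
    (hJcounit : ∀ x ∈ J, Coalgebra.counit (R := ℂ) x = 0)
    (hJantipode : ∀ x ∈ J, HopfAlgebra.antipode (R := ℂ) x ∈ J)
    (K : Type*) [CommRing K] [Algebra ℂ K]
    (Kneg Kpos : Submodule ℂ K)
    (hsplit : IsCompl Kneg Kpos)
    (hKnegMul : ∀ x ∈ Kneg, ∀ y ∈ Kneg, x * y ∈ Kneg)
    (hKposMul : ∀ x ∈ Kpos, ∀ y ∈ Kpos, x * y ∈ Kpos)
    (hKposOne : (1 : K) ∈ Kpos)
    (γ : H →ₐ[ℂ] K)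
    (hγJ : ∀ x ∈ J, γ x = 0)
    (γm γp : H →ₐ[ℂ] K)
    (hγm : ∀ x : H, γm x - algebraMap ℂ K (Coalgebra.counit (R := ℂ) x) ∈ Kneg)
    (hγp : ∀ x : H, γp x ∈ Kpos)
    (hBirkhoff : ∀ x : H, γ x =
      LinearMap.mul' ℂ K
        (TensorProduct.map (γm.toLinearMap ∘ₗ HopfAlgebra.antipode (R := ℂ))
          γp.toLinearMap (Coalgebra.comul (R := ℂ) x))) :
    ∀ x ∈ J, γm x = 0 ∧ γp x = 0 :=
  birkhoff_components_vanish_on_hopf_ideal_general H ℬ hinternal hconn hcomul J hJcomul hJcounit K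
    Kneg Kpos hsplit γ hγJ γm γp hγm hγp hBirkhoff
end

section
/- The coaction ρ : F → F ⊗ H defined on generators by ρ(λ_j) = Σ_n λ_j λ^n ⊗ p_n(Y_{v_j}) (j = 1,...,5) and ρ(φ_i) = Σ_n φ_i λ^n ⊗ p_n(√(G^{e_i})) (i = 1,2,3), extended as an algebra homomorphism, makes F a comodule algebra over H: (ρ ⊗ id)∘ρ = (id ⊗ Δ)∘ρ and (id ⊗ ε)∘ρ = id. -/
/-!
Write `P(a, d) = Y^a (√G)^d`, so that `ρ(λ^a φ^d) = Σ_n λ^(a+n) φ^d ⊗ pₙ(P(a, d))`.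
Since `P(a + a', d + d') = P(a, d) P(a', d')`, `ρ` is multiplicative. Coassociativity
amounts to `Δ(pₖ P) = Σ_{n+l=k} pₙ(P Y^l) ⊗ pₗ(P)` for every `P = P(a, d)`: the series
satisfying this identity form a submonoid, which contains the generators `Y_{v_j}` and
`√G^{e_i}` by the definition of `Δ`. The counit law holds because `ε` sends every
generating series to `1`.
-/

open scoped TensorProduct
noncomputable section

abbrev Md5 := Fin 5 →₀ ℕ

/-- The QCD renormalization Hopf algebra `H`: free commutative ℂ-algebra on the symbols
`pₙ(Y_{v_j})` (`j = 1,…,5`) and `pₙ(√G^{e_i})` (`i = 1,2,3`), `n ∈ ℕ⁵ \ {0}`. -/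
abbrev BH := MvPolynomial ((Fin 5 ⊕ Fin 3) × {n : Md5 // n ≠ 0}) ℂ

def PgenH (r : Fin 5 ⊕ Fin 3) (n : Md5) : BH :=
  if h : n = 0 then 1 else MvPolynomial.X (r, ⟨n, h⟩)

/-- The series `Y_{v_j} = Σ_n pₙ(Y_{v_j})`. -/
def Yg (j : Fin 5) : MvPowerSeries (Fin 5) BH := fun n => PgenH (Sum.inl j) n

/-- The series `√G^{e_i} = Σ_n pₙ(√G^{e_i})`. -/
def Gg (i : Fin 3) : MvPowerSeries (Fin 5) BH := fun n => PgenH (Sum.inr i) n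

def serOf (r : Fin 5 ⊕ Fin 3) : MvPowerSeries (Fin 5) BH :=
  match r with | Sum.inl j => Yg j | Sum.inr i => Gg i

/-- The coproduct: `Δ(Y_{v_j}) = Σ_n Y_{v_j} Y^n ⊗ pₙ(Y_{v_j})` and
`Δ(√G^{e_i}) = Σ_n √G^{e_i}·Y^n ⊗ pₙ(√G^{e_i})`, componentwise on generators. -/
def ΔH : BH →ₐ[ℂ] BH ⊗[ℂ] BH :=
  MvPolynomial.aeval (fun p : (Fin 5 ⊕ Fin 3) × {n : Md5 // n ≠ 0} =>
    ∑ ab ∈ Finset.HasAntidiagonal.antidiagonal (p.2 : Md5),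
      (MvPowerSeries.coeff ab.1 (serOf p.1 * ∏ j, (Yg j) ^ ((ab.2 : Md5) j))) ⊗ₜ[ℂ]
        PgenH p.1 ab.2)

/-- The counit. -/
def εH : BH →ₐ[ℂ] ℂ := MvPolynomial.aeval (fun _ => (0 : ℂ))

/-- `F = ℂ[[λ₁,…,λ₅]] ⊗ ℂ[φ₁,φ₂,φ₃]`, realized as power series in `λ` with polynomial
coefficients in the field symbols `φ`. -/
abbrev FF := MvPowerSeries (Fin 5) (MvPolynomial (Fin 3) ℂ)

/-- The completed tensor product `F ⊗̂ H`. -/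
abbrev TT := MvPowerSeries (Fin 5) (MvPolynomial (Fin 3) BH)

/-- The completed tensor product `F ⊗̂ H ⊗̂ H`. -/
abbrev TT2 := MvPowerSeries (Fin 5) (MvPolynomial (Fin 3) (BH ⊗[ℂ] BH))

/-- The product series `Y₁^(a₁)···Y₅^(a₅)·(√G¹)^(d₁)···(√G³)^(d₃)`. -/
def prodSer (a : Md5) (d : Fin 3 →₀ ℕ) : MvPowerSeries (Fin 5) BH :=
  (∏ j, (Yg j) ^ (a j)) * ∏ i, (Gg i) ^ (d i)

/-- The coaction `ρ : F → F ⊗̂ H`, `ρ(λ^a φ^d) = Σ_n λ^(a+n) φ^d ⊗ pₙ(Y^a (√G)^d)`. -/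
def ρH (S : FF) : TT :=
  fun m => ∑ an ∈ Finset.HasAntidiagonal.antidiagonal m,
    ∑ d ∈ (S an.1).support,
      MvPolynomial.coeff d (S an.1) •
        (MvPolynomial.monomial d (MvPowerSeries.coeff an.2 (prodSer an.1 d)))

/-- `ρ ⊗ id : F ⊗̂ H → F ⊗̂ H ⊗̂ H`. -/
def ρhat (S : TT) : TT2 :=
  fun m => ∑ an ∈ Finset.HasAntidiagonal.antidiagonal m,
    ∑ d ∈ (S an.1).support,
      MvPolynomial.monomial d
        ((MvPowerSeries.coeff an.2 (prodSer an.1 d)) ⊗ₜ[ℂ] MvPolynomial.coeff d (S an.1))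

/-- `id ⊗ Δ : F ⊗̂ H → F ⊗̂ H ⊗̂ H`. -/
def idΔ : TT →+* TT2 :=
  MvPowerSeries.map (MvPolynomial.map ΔH.toRingHom)

/-- `id ⊗ ε : F ⊗̂ H → F`. -/
def idε : TT →+* FF :=
  MvPowerSeries.map (MvPolynomial.map εH.toRingHom)

open Finset
open MvPowerSeries (coeff coeff_apply coeff_mul coeff_one coeff_map)

section Antidiagonal

variable {A M : Type*} [AddCommMonoid A] [HasAntidiagonal A] [AddCommMonoid M]

theorem sum_antidiagonal_antidiagonal_fst (m : A) (f : A → A → A → M) :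
    ∑ p ∈ antidiagonal m, ∑ q ∈ antidiagonal p.1, f q.1 q.2 p.2
      = ∑ p ∈ antidiagonal m, ∑ q ∈ antidiagonal p.2, f p.1 q.1 q.2 := by
  simp only [sum_sigma']
  apply sum_nbij' (fun ⟨⟨_, c⟩, ⟨a, b⟩⟩ ↦ ⟨(a, b + c), (b, c)⟩)
    (fun ⟨⟨a, _⟩, ⟨b, c⟩⟩ ↦ ⟨(a + b, c), (a, b)⟩) <;> aesop (add simp [add_assoc])

theorem sum_antidiagonal_add_add_add_comm (m : A) (f : A → A → A → A → M) :
    ∑ p ∈ antidiagonal m, ∑ q ∈ antidiagonal p.1, ∑ r ∈ antidiagonal p.2,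
        f q.1 q.2 r.1 r.2
      = ∑ p ∈ antidiagonal m, ∑ q ∈ antidiagonal p.1, ∑ r ∈ antidiagonal p.2,
          f q.1 r.1 q.2 r.2 := by
  simp only [← sum_product', sum_sigma']
  apply sum_nbij' (fun ⟨_, ⟨a, b⟩, ⟨c, d⟩⟩ ↦ ⟨(a + c, b + d), (a, c), (b, d)⟩)
    (fun ⟨_, ⟨a, b⟩, ⟨c, d⟩⟩ ↦ ⟨(a + c, b + d), (a, c), (b, d)⟩) <;>
    aesop (add simp [add_add_add_comm])

end Antidiagonal

theorem prod_pow_add_apply {ι M : Type*} [Fintype ι] [CommMonoid M] (f : ι → M)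
    (u v : ι →₀ ℕ) : ∏ i, f i ^ (u + v) i = (∏ i, f i ^ u i) * ∏ i, f i ^ v i := by
  simp only [Finsupp.add_apply, pow_add, prod_mul_distrib]

theorem coeff_coeff_mul {σ τ R : Type*} [DecidableEq σ] [DecidableEq τ] [CommSemiring R]
    (A B : MvPowerSeries σ (MvPolynomial τ R)) (m : σ →₀ ℕ) (d : τ →₀ ℕ) :
    MvPolynomial.coeff d (coeff m (A * B))
      = ∑ p ∈ antidiagonal m, ∑ q ∈ antidiagonal d,
          MvPolynomial.coeff q.1 (coeff p.1 A) * MvPolynomial.coeff q.2 (coeff p.2 B) := by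
  simp only [coeff_mul, MvPolynomial.coeff_sum, MvPolynomial.coeff_mul]

def Ypow (k : Md5) : MvPowerSeries (Fin 5) BH := ∏ j, Yg j ^ k j

theorem Ypow_zero : Ypow 0 = 1 := by
  simp [Ypow]

theorem Ypow_add (k l : Md5) : Ypow (k + l) = Ypow k * Ypow l :=
  prod_pow_add_apply _ k l

theorem prodSer_add (a a' : Md5) (d d' : Fin 3 →₀ ℕ) :
    prodSer (a + a') (d + d') = prodSer a d * prodSer a' d' := by
  simp only [prodSer, prod_pow_add_apply]
  ring

theorem prodSer_add_left (a k : Md5) (d : Fin 3 →₀ ℕ) :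
    prodSer (a + k) d = prodSer a d * Ypow k := by
  simp only [prodSer, Ypow, prod_pow_add_apply]
  ring

theorem prodSer_zero : prodSer 0 0 = 1 := by
  simp [prodSer]

theorem coeff_serOf (r : Fin 5 ⊕ Fin 3) (k : Md5) : coeff k (serOf r) = PgenH r k := by
  cases r <;> rfl

/-- The contribution of the monomial `λ^a φ^d` of `S` to the `λ^(a+n) φ^d` coefficient
of `ρ S`. -/
def ρTerm (S : FF) (d : Fin 3 →₀ ℕ) (a n : Md5) : BH :=
  MvPolynomial.coeff d (coeff a S) • coeff n (prodSer a d)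

theorem coeff_ρH (S : FF) (m : Md5) (d : Fin 3 →₀ ℕ) :
    MvPolynomial.coeff d (coeff m (ρH S)) = ∑ p ∈ antidiagonal m, ρTerm S d p.1 p.2 := by
  simp only [coeff_apply, ρH, ρTerm, MvPolynomial.coeff_sum, MvPolynomial.coeff_smul,
    MvPolynomial.coeff_monomial]
  refine sum_congr rfl fun p _ => ?_
  simp +contextual

theorem coeff_ρhat (T : TT) (m : Md5) (d : Fin 3 →₀ ℕ) :
    MvPolynomial.coeff d (coeff m (ρhat T))
      = ∑ p ∈ antidiagonal m, coeff p.2 (prodSer p.1 d) ⊗ₜ[ℂ]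
          MvPolynomial.coeff d (coeff p.1 T) := by
  simp only [coeff_apply, ρhat, MvPolynomial.coeff_sum, MvPolynomial.coeff_monomial]
  refine sum_congr rfl fun p _ => ?_
  simp +contextual

theorem ρTerm_mul (S S' : FF) (d : Fin 3 →₀ ℕ) (a n : Md5) :
    ρTerm (S * S') d a n
      = ∑ u ∈ antidiagonal a, ∑ r ∈ antidiagonal n, ∑ q ∈ antidiagonal d,
          ρTerm S q.1 u.1 r.1 * ρTerm S' q.2 u.2 r.2 := by
  rw [ρTerm, coeff_coeff_mul, sum_smul]
  refine sum_congr rfl fun u hu => ?_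
  rw [sum_smul, sum_comm]
  refine sum_congr rfl fun q hq => ?_
  rw [← mem_antidiagonal.mp hu, ← mem_antidiagonal.mp hq, prodSer_add, coeff_mul, smul_sum]
  exact sum_congr rfl fun r _ => (smul_mul_smul_comm _ _ _ _).symm

theorem ρH_mul (S S' : FF) : ρH (S * S') = ρH S * ρH S' := by
  ext m d : 2
  rw [coeff_ρH, coeff_coeff_mul]
  simp only [ρTerm_mul, coeff_ρH, sum_mul_sum]
  rw [sum_antidiagonal_add_add_add_comm m fun a₁ a₂ n₁ n₂ => ∑ q ∈ antidiagonal d,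
    ρTerm S q.1 a₁ n₁ * ρTerm S' q.2 a₂ n₂]
  refine sum_congr rfl fun p _ => ?_
  exact (sum_comm.trans (sum_congr rfl fun _ _ => sum_comm)).symm

theorem ρH_one : ρH 1 = 1 := by
  ext m d : 2
  rw [coeff_ρH, sum_eq_single (0, m)]
  · rcases eq_or_ne d 0 with rfl | hd
    · by_cases hm : m = 0 <;> simp [ρTerm, prodSer_zero, coeff_one, hm]
    · by_cases hm : m = 0 <;> simp [ρTerm, coeff_one, MvPolynomial.coeff_one, hm, hd.symm]
  · rintro ⟨a, n⟩ hp hne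
    have ha : a ≠ 0 := by
      rintro rfl
      simp_all
    simp [ρTerm, coeff_one, ha]
  · simp

def ΔHCompatible (F : MvPowerSeries (Fin 5) BH) : Prop :=
  ∀ k, ΔH (coeff k F) =
    ∑ p ∈ antidiagonal k, coeff p.1 (F * Ypow p.2) ⊗ₜ[ℂ] coeff p.2 F

theorem ΔHCompatible.one : ΔHCompatible 1 := by
  intro k
  rw [sum_eq_single (k, 0)]
  · by_cases hk : k = 0 <;> simp [Ypow_zero, coeff_one, hk, Algebra.TensorProduct.one_def]
  · rintro ⟨n, l⟩ hp hne
    have hl : l ≠ 0 := by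
      rintro rfl
      simp_all
    simp [coeff_one, hl]
  · simp

theorem ΔHCompatible.mul {F G : MvPowerSeries (Fin 5) BH} (hF : ΔHCompatible F)
    (hG : ΔHCompatible G) : ΔHCompatible (F * G) := by
  intro k
  calc ΔH (coeff k (F * G))
      = ∑ p ∈ antidiagonal k, ∑ q ∈ antidiagonal p.1, ∑ r ∈ antidiagonal p.2,
          (coeff q.1 (F * Ypow q.2) * coeff r.1 (G * Ypow r.2)) ⊗ₜ[ℂ]
            (coeff q.2 F * coeff r.2 G) := by
        rw [coeff_mul, map_sum]
        refine sum_congr rfl fun p _ => ?_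
        rw [map_mul, hF, hG, sum_mul_sum]
        simp only [Algebra.TensorProduct.tmul_mul_tmul]
    _ = ∑ p ∈ antidiagonal k, ∑ q ∈ antidiagonal p.1, ∑ r ∈ antidiagonal p.2,
          (coeff q.1 (F * Ypow r.1) * coeff q.2 (G * Ypow r.2)) ⊗ₜ[ℂ]
            (coeff r.1 F * coeff r.2 G) :=
        sum_antidiagonal_add_add_add_comm k fun a b c d =>
          (coeff a (F * Ypow b) * coeff c (G * Ypow d)) ⊗ₜ[ℂ] (coeff b F * coeff d G)
    _ = ∑ p ∈ antidiagonal k, coeff p.1 (F * G * Ypow p.2) ⊗ₜ[ℂ] coeff p.2 (F * G) := by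
        refine sum_congr rfl fun p _ => ?_
        rw [coeff_mul p.2, TensorProduct.tmul_sum, sum_comm]
        refine sum_congr rfl fun r hr => ?_
        rw [← mem_antidiagonal.mp hr, Ypow_add, mul_mul_mul_comm, coeff_mul,
          TensorProduct.sum_tmul]

def ΔHCompatibleSubmonoid : Submonoid (MvPowerSeries (Fin 5) BH) where
  carrier := {F | ΔHCompatible F}
  mul_mem' := ΔHCompatible.mul
  one_mem' := ΔHCompatible.one

theorem ΔHCompatible_serOf (r : Fin 5 ⊕ Fin 3) : ΔHCompatible (serOf r) := by
  intro k
  rw [coeff_serOf, PgenH]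
  split_ifs with hk
  · subst hk
    simp [coeff_serOf, PgenH, Ypow_zero, Algebra.TensorProduct.one_def]
  · simp only [ΔH, MvPolynomial.aeval_X, coeff_serOf]
    rfl

theorem ΔHCompatible_prodSer (a : Md5) (d : Fin 3 →₀ ℕ) : ΔHCompatible (prodSer a d) :=
  show prodSer a d ∈ ΔHCompatibleSubmonoid from
    mul_mem (prod_mem fun j _ => pow_mem (ΔHCompatible_serOf (.inl j)) _)
      (prod_mem fun i _ => pow_mem (ΔHCompatible_serOf (.inr i)) _)

theorem ρH_coassoc (S : FF) : ρhat (ρH S) = idΔ (ρH S) := by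
  ext m d : 2
  have h_idΔ : MvPolynomial.coeff d (coeff m (idΔ (ρH S)))
      = ΔH (MvPolynomial.coeff d (coeff m (ρH S))) := by
    rw [idΔ, coeff_map, MvPolynomial.coeff_map]
    rfl
  rw [coeff_ρhat, h_idΔ, coeff_ρH, map_sum]
  calc ∑ p ∈ antidiagonal m,
        coeff p.2 (prodSer p.1 d) ⊗ₜ[ℂ] MvPolynomial.coeff d (coeff p.1 (ρH S))
      = ∑ p ∈ antidiagonal m, ∑ u ∈ antidiagonal p.1, MvPolynomial.coeff d (coeff u.1 S) •
          (coeff p.2 (prodSer u.1 d * Ypow u.2) ⊗ₜ[ℂ] coeff u.2 (prodSer u.1 d)) := by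
        refine sum_congr rfl fun p _ => ?_
        rw [coeff_ρH, TensorProduct.tmul_sum]
        refine sum_congr rfl fun u hu => ?_
        rw [← mem_antidiagonal.mp hu, prodSer_add_left, ρTerm, TensorProduct.tmul_smul]
    _ = ∑ p ∈ antidiagonal m, ∑ q ∈ antidiagonal p.2, MvPolynomial.coeff d (coeff p.1 S) •
          (coeff q.2 (prodSer p.1 d * Ypow q.1) ⊗ₜ[ℂ] coeff q.1 (prodSer p.1 d)) :=
        sum_antidiagonal_antidiagonal_fst m fun b k n => MvPolynomial.coeff d (coeff b S) •
          (coeff n (prodSer b d * Ypow k) ⊗ₜ[ℂ] coeff k (prodSer b d))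
    _ = ∑ p ∈ antidiagonal m, ΔH (ρTerm S d p.1 p.2) := by
        refine sum_congr rfl fun p _ => ?_
        rw [ρTerm, map_smul, ΔHCompatible_prodSer, smul_sum]
        exact (Finsupp.sum_antidiagonal_swap p.2 fun n k =>
          MvPolynomial.coeff d (coeff p.1 S) •
            (coeff n (prodSer p.1 d * Ypow k) ⊗ₜ[ℂ] coeff k (prodSer p.1 d))).symm

theorem map_εH_serOf (r : Fin 5 ⊕ Fin 3) : MvPowerSeries.map εH.toRingHom (serOf r) = 1 := by
  ext k
  rw [coeff_map, coeff_serOf, coeff_one, PgenH]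
  split_ifs <;> simp [εH]

theorem εH_coeff_prodSer (a : Md5) (d : Fin 3 →₀ ℕ) (n : Md5) :
    εH (coeff n (prodSer a d)) = coeff n 1 := by
  have hY (j : Fin 5) : MvPowerSeries.map εH.toRingHom (Yg j) = 1 := map_εH_serOf (.inl j)
  have hG (i : Fin 3) : MvPowerSeries.map εH.toRingHom (Gg i) = 1 := map_εH_serOf (.inr i)
  have hP : MvPowerSeries.map εH.toRingHom (prodSer a d) = 1 := by
    rw [prodSer, map_mul, map_prod, map_prod]
    simp only [map_pow, hY, hG, one_pow, prod_const_one, mul_one]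
  rw [← hP, coeff_map]
  rfl

theorem idε_ρH (S : FF) : idε (ρH S) = S := by
  ext m d : 2
  have h_idε : MvPolynomial.coeff d (coeff m (idε (ρH S)))
      = εH (MvPolynomial.coeff d (coeff m (ρH S))) := by
    rw [idε, coeff_map, MvPolynomial.coeff_map]
    rfl
  let Sd : MvPowerSeries (Fin 5) ℂ := fun a => MvPolynomial.coeff d (coeff a S)
  calc MvPolynomial.coeff d (coeff m (idε (ρH S)))
      = ∑ p ∈ antidiagonal m, coeff p.1 Sd * coeff p.2 1 := by
        simp only [h_idε, coeff_ρH, map_sum, ρTerm, map_smul, εH_coeff_prodSer, smul_eq_mul]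
        rfl
    _ = coeff m Sd := by rw [← coeff_mul, mul_one]

/-- the coaction `ρ : F → F ⊗ H` given on generators by
`ρ(λ_j) = Σ_n λ_j λ^n ⊗ pₙ(Y_{v_j})` and `ρ(φ_i) = Σ_n φ_i λ^n ⊗ pₙ(√G^{e_i})`,
extended as an algebra homomorphism, makes `F` a comodule algebra over `H`:
`ρ` is an algebra map, `(ρ ⊗ id)∘ρ = (id ⊗ Δ)∘ρ` and `(id ⊗ ε)∘ρ = id`. -/
theorem coaction_comodule_algebra :
    (∀ S S' : FF, ρH (S * S') = ρH S * ρH S') ∧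
    (ρH 1 = 1) ∧
    (∀ S : FF, ρhat (ρH S) = idΔ (ρH S)) ∧
    (∀ S : FF, idε (ρH S) = S) :=
  ⟨ρH_mul, ρH_one, ρH_coassoc, idε_ρH⟩
end
end

section
/- In the Hopf algebra H generated by components of the series G^{e_i} = 1 - (positive-degree terms) and G^{v_j} = 1 + (positive-degree terms) with coproduct Δ((G^r)^α) = Σ_n (G^r)^α Y_{v_1}^{n_1}···Y_{v_5}^{n_5} ⊗ p_n((G^r)^α) for all real α, the elements Y_{v_j} := G^{v_j} · Π_{i=1,2,3} (G^{e_i})^{-N_i(v_j)/2} satisfy Δ(Y_{v_j}) = Σ_n Y_{v_j} Y_{v_1}^{n_1}···Y_{v_5}^{n_5} ⊗ p_n(Y_{v_j}). -/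
/-! The twisted coproduct formula `Δ (p_m f) = Σ_{a+b=m} p_a (f Y^b) ⊗ p_b f` is multiplicative
in `f`: since `Y^(b+b') = Y^b Y^b'`, the twisted factor of a product splits over any decomposition
of the degree, and the four-fold sums on both sides agree after regrouping. So the formula passes
from `G^{v_j} = (G^{v_j})^1` and the real powers of the `G^{e_i}` to their product `Y_{v_j}`. -/

open scoped TensorProduct
noncomputable section

/-- Degreewise real power of a formal series with constant term 1, via the binomial
series: `coeff_m (f^α) = Σ_k (α choose k) coeff_m ((f-1)^k)` (a finite sum in each
multidegree since `f - 1` has positive order). -/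
def rpowSer (H : Type*) [CommRing H] [Algebra ℂ H] (α : ℝ)
    (f : MvPowerSeries (Fin 5) H) : MvPowerSeries (Fin 5) H :=
  fun m => ∑ᶠ k : ℕ,
    ((((∏ i ∈ Finset.range k, (α - (i : ℝ))) / (k.factorial : ℝ) : ℝ) : ℂ)) •
      MvPowerSeries.coeff m ((f - 1) ^ k)

open Finset MvPowerSeries

theorem rpowSer_one (H : Type*) [CommRing H] [Algebra ℂ H] (f : MvPowerSeries (Fin 5) H) :
    rpowSer H 1 f = f := by
  ext m
  have hvanish : ∀ k ∉ range 2, ∏ i ∈ range k, (1 - (i : ℝ)) = 0 := fun k hk =>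
    prod_eq_zero (i := 1) (by simp_all) (by norm_num)
  show (∑ᶠ k : ℕ, _) = _
  rw [finsum_eq_sum_of_support_subset _ (s := range 2)
    (Function.support_subset_iff'.2 fun k hk => by simp [hvanish k hk])]
  simp [sum_range_succ]

theorem sum_antidiagonal_antidiagonal_comm {A M : Type*} [AddCommMonoid A] [HasAntidiagonal A]
    [AddCommMonoid M] (m : A) (F : A → A → A → A → M) :
    ∑ x ∈ antidiagonal m, ∑ y ∈ antidiagonal x.1, ∑ z ∈ antidiagonal x.2, F y.1 y.2 z.1 z.2 =
      ∑ x ∈ antidiagonal m, ∑ y ∈ antidiagonal x.1, ∑ z ∈ antidiagonal x.2,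
        F y.1 z.1 y.2 z.2 := by
  simp only [sum_sigma']
  apply sum_nbij' (fun ⟨_, ⟨a, b⟩, ⟨c, d⟩⟩ ↦ ⟨(a + c, b + d), (a, c), (b, d)⟩)
    (fun ⟨_, ⟨a, c⟩, ⟨b, d⟩⟩ ↦ ⟨(a + b, c + d), (a, b), (c, d)⟩) <;>
    aesop (add simp [add_add_add_comm])

namespace MvPowerSeries

variable (R : Type*) {σ H : Type*} [CommSemiring R] [CommSemiring H] [Algebra R H]
  [Fintype σ] [DecidableEq σ]

def twistedCoproduct (Y : σ → MvPowerSeries σ H) (f : MvPowerSeries σ H) (m : σ →₀ ℕ) :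
    H ⊗[R] H :=
  ∑ an ∈ antidiagonal m, coeff an.1 (f * ∏ j, Y j ^ an.2 j) ⊗ₜ[R] coeff an.2 f

variable {R}

theorem twistedCoproduct_mul (Y : σ → MvPowerSeries σ H) (f g : MvPowerSeries σ H)
    (m : σ →₀ ℕ) :
    twistedCoproduct R Y (f * g) m =
      ∑ pq ∈ antidiagonal m, twistedCoproduct R Y f pq.1 * twistedCoproduct R Y g pq.2 := by
  simp only [twistedCoproduct, sum_mul_sum, Algebra.TensorProduct.tmul_mul_tmul]
  rw [← sum_antidiagonal_antidiagonal_comm m fun a₁ a₂ c d =>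
    (coeff a₁ (f * ∏ j, Y j ^ c j) * coeff a₂ (g * ∏ j, Y j ^ d j)) ⊗ₜ[R] (coeff c f * coeff d g)]
  refine sum_congr rfl fun ab _ => ?_
  rw [coeff_mul ab.2 f g, TensorProduct.tmul_sum, sum_comm]
  refine sum_congr rfl fun cd hcd => ?_
  have hsplit : f * g * ∏ j, Y j ^ ab.2 j =
      (f * ∏ j, Y j ^ cd.1 j) * (g * ∏ j, Y j ^ cd.2 j) := by
    rw [← mem_antidiagonal.1 hcd]
    simp only [Finsupp.add_apply, pow_add, prod_mul_distrib]
    ring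
  rw [hsplit, coeff_mul, TensorProduct.sum_tmul]

theorem twistedCoproduct_one (Y : σ → MvPowerSeries σ H) (m : σ →₀ ℕ) :
    twistedCoproduct R Y 1 m = coeff m 1 ⊗ₜ[R] 1 := by
  rw [twistedCoproduct, sum_eq_single_of_mem (m, 0) (by simp) fun x hx hne => ?_]
  · simp
  · have hx₂ : x.2 ≠ 0 := fun h => hne (Prod.ext (by simpa [h] using mem_antidiagonal.1 hx) h)
    simp [coeff_one, hx₂]

def SatisfiesTwistedCoproduct (Δ : H →ₐ[R] H ⊗[R] H) (Y : σ → MvPowerSeries σ H)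
    (f : MvPowerSeries σ H) : Prop :=
  ∀ m, Δ (coeff m f) = twistedCoproduct R Y f m

namespace SatisfiesTwistedCoproduct

variable {Δ : H →ₐ[R] H ⊗[R] H} {Y : σ → MvPowerSeries σ H}

theorem one : SatisfiesTwistedCoproduct Δ Y 1 := by
  intro m
  rw [twistedCoproduct_one, coeff_one]
  split_ifs <;> simp [Algebra.TensorProduct.one_def]

theorem mul {f g : MvPowerSeries σ H} (hf : SatisfiesTwistedCoproduct Δ Y f)
    (hg : SatisfiesTwistedCoproduct Δ Y g) : SatisfiesTwistedCoproduct Δ Y (f * g) := by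
  intro m
  simp only [coeff_mul, map_sum, map_mul, hf _, hg _, twistedCoproduct_mul]

theorem prod {ι : Type*} (s : Finset ι) {f : ι → MvPowerSeries σ H}
    (hf : ∀ i ∈ s, SatisfiesTwistedCoproduct Δ Y (f i)) :
    SatisfiesTwistedCoproduct Δ Y (∏ i ∈ s, f i) :=
  prod_induction f _ (fun _ _ => mul) one hf

end SatisfiesTwistedCoproduct

end MvPowerSeries

theorem coproduct_on_Y_elements_general
    (H : Type*) [CommRing H] [Algebra ℂ H]
    (Δ : H →ₐ[ℂ] H ⊗[ℂ] H)
    (Ge : Fin 3 → MvPowerSeries (Fin 5) H) (Gv : Fin 5 → MvPowerSeries (Fin 5) H)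
    (Nl : Fin 3 → Fin 5 → ℕ)  -- `N_i(v_j)`: number of `e_i`-lines attached to `v_j`
    -- the elements `Y_{v_j} = G^{v_j} Π_i (G^{e_i})^{-N_i(v_j)/2}`:
    (Y : Fin 5 → MvPowerSeries (Fin 5) H)
    (hY : ∀ j, Y j = Gv j * ∏ i, rpowSer H (-((Nl i j : ℝ) / 2)) (Ge i))
    -- hypothesis: the coproduct formula for all real powers of all `G^r`:
    (hΔ : ∀ G ∈ Set.range Ge ∪ Set.range Gv, ∀ (α : ℝ) (m : Md5),
      Δ (MvPowerSeries.coeff m (rpowSer H α G)) =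
        ∑ an ∈ Finset.HasAntidiagonal.antidiagonal m,
          MvPowerSeries.coeff an.1
              (rpowSer H α G * ∏ j, (Y j) ^ ((an.2 : Md5) j)) ⊗ₜ[ℂ]
            MvPowerSeries.coeff an.2 (rpowSer H α G)) :
    ∀ (j : Fin 5) (m : Md5),
      Δ (MvPowerSeries.coeff m (Y j)) =
        ∑ an ∈ Finset.HasAntidiagonal.antidiagonal m,
          MvPowerSeries.coeff an.1 (Y j * ∏ j', (Y j') ^ ((an.2 : Md5) j')) ⊗ₜ[ℂ]
            MvPowerSeries.coeff an.2 (Y j) := by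
  intro j
  have hGv : SatisfiesTwistedCoproduct Δ Y (Gv j) :=
    rpowSer_one H (Gv j) ▸ hΔ (Gv j) (Or.inr ⟨j, rfl⟩) 1
  rw [hY j]
  exact hGv.mul <| SatisfiesTwistedCoproduct.prod _ fun i _ =>
    hΔ (Ge i) (Or.inl ⟨i, rfl⟩) _

/-- in a commutative Hopf algebra `H` containing invertible formal series
`G^{e_i}` (`i = 1,2,3`) and `G^{v_j}` (`j = 1,…,5`) of the form `1 + higher multidegree`,
whose real powers all satisfy the multiplicative coproduct formula
`Δ((G^r)^α) = Σ_n (G^r)^α Y_{v_1}^{n_1}···Y_{v_5}^{n_5} ⊗ pₙ((G^r)^α)`,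
the elements `Y_{v_j} := G^{v_j} · Π_i (G^{e_i})^{-N_i(v_j)/2}` satisfy
`Δ(Y_{v_j}) = Σ_n Y_{v_j} Y_{v_1}^{n_1}···Y_{v_5}^{n_5} ⊗ pₙ(Y_{v_j})`. -/
theorem coproduct_on_Y_elements
    (H : Type*) [CommRing H] [Algebra ℂ H]
    (Δ : H →ₐ[ℂ] H ⊗[ℂ] H)
    (Ge : Fin 3 → MvPowerSeries (Fin 5) H) (Gv : Fin 5 → MvPowerSeries (Fin 5) H)
    (hGe : ∀ i, MvPowerSeries.constantCoeff (Ge i) = 1)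
    (hGv : ∀ j, MvPowerSeries.constantCoeff (Gv j) = 1)
    (Nl : Fin 3 → Fin 5 → ℕ)  -- `N_i(v_j)`: number of `e_i`-lines attached to `v_j`
    -- the elements `Y_{v_j} = G^{v_j} Π_i (G^{e_i})^{-N_i(v_j)/2}`:
    (Y : Fin 5 → MvPowerSeries (Fin 5) H)
    (hY : ∀ j, Y j = Gv j * ∏ i, rpowSer H (-((Nl i j : ℝ) / 2)) (Ge i))
    -- hypothesis: the coproduct formula for all real powers of all `G^r`:
    (hΔ : ∀ G ∈ Set.range Ge ∪ Set.range Gv, ∀ (α : ℝ) (m : Md5),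
      Δ (MvPowerSeries.coeff m (rpowSer H α G)) =
        ∑ an ∈ Finset.HasAntidiagonal.antidiagonal m,
          MvPowerSeries.coeff an.1
              (rpowSer H α G * ∏ j, (Y j) ^ ((an.2 : Md5) j)) ⊗ₜ[ℂ]
            MvPowerSeries.coeff an.2 (rpowSer H α G)) :
    ∀ (j : Fin 5) (m : Md5),
      Δ (MvPowerSeries.coeff m (Y j)) =
        ∑ an ∈ Finset.HasAntidiagonal.antidiagonal m,
          MvPowerSeries.coeff an.1 (Y j * ∏ j', (Y j') ^ ((an.2 : Md5) j')) ⊗ₜ[ℂ]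
            MvPowerSeries.coeff an.2 (Y j) :=
  coproduct_on_Y_elements_general H Δ Ge Gv Nl Y hY hΔ
end
end
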